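/- arXiv:1511.05874 — 5 statements merged into one kernel-verified Lean document; each statement's English description precedes it below -/
import Mathlib

section
/- Generalized Hölder inequality: Let (X, 𝔐, λ) be a measure space, let 1 ≤ r ≤ ℓ, and let F_1, …, F_ℓ : X → ℂ be measurable. Then ∫_X ∏_{j=1}^ℓ |F_j| dλ ≤ ∏_{S ⊆ [ℓ], |S|=r} ( ∫_X ∏_{j∈S} |F_j|^{ℓ/r} dλ )^{1/C(ℓ,r)}, where the product is over all subsets S of [ℓ] of size r. -/
/-!
Each `j ∈ [ℓ]` lies in exactly `C(ℓ-1, r-1) = (r/ℓ) C(ℓ, r)` of the `r`-subsets of `[ℓ]`,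
so pointwise `∏_j |F_j| = ∏_S (∏_{j ∈ S} |F_j|^{ℓ/r})^{1/C(ℓ,r)}`. The inequality is then
Hölder's inequality for the `C(ℓ, r)` functions `∏_{j ∈ S} |F_j|^{ℓ/r}` with equal weights
`1/C(ℓ, r)`.
-/

open MeasureTheory ENNReal Finset

lemma card_filter_mem_powersetCard {α : Type*} [DecidableEq α] {t : Finset α} {a : α}
    (ha : a ∈ t) {r : ℕ} (hr : 1 ≤ r) :
    #((t.powersetCard r).filter (a ∈ ·)) = (#t - 1).choose (r - 1) := by
  simpa using card_filter_powersetCard_subset {a} t r (singleton_subset_iff.2 ha) hr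

lemma div_mul_one_div_choose_mul_choose_pred {n r : ℕ} (hr : 1 ≤ r) (hrn : r ≤ n) :
    (n : ℝ) / r * (1 / n.choose r) * ((n - 1).choose (r - 1) : ℕ) = 1 := by
  obtain ⟨k, rfl⟩ := Nat.exists_eq_add_of_le' hr
  obtain ⟨m, rfl⟩ := Nat.exists_eq_add_of_le' (hr.trans hrn)
  have hchoose : ((m + 1 : ℕ) : ℝ) * m.choose k = (m + 1).choose (k + 1) * (k + 1 : ℕ) := by
    exact_mod_cast Nat.add_one_mul_choose_eq m k
  have hpos : ((m + 1).choose (k + 1) : ℝ) ≠ 0 := by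
    exact_mod_cast (Nat.choose_pos hrn).ne'
  simp only [Nat.add_sub_cancel]
  field_simp
  linarith

lemma prod_eq_prod_powersetCard_rpow {ι : Type*} (t : Finset ι) {r : ℕ} (hr : 1 ≤ r)
    (hrt : r ≤ #t) (g : ι → ℝ≥0∞) :
    ∏ j ∈ t, g j =
      ∏ S ∈ t.powersetCard r,
        (∏ j ∈ S, g j ^ ((#t : ℝ) / r)) ^ (1 / ((#t).choose r : ℝ)) := by
  classical
  set e : ℝ := (#t : ℝ) / r * (1 / ((#t).choose r : ℝ))
  have hfactor : ∀ S ∈ t.powersetCard r,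
      (∏ j ∈ S, g j ^ ((#t : ℝ) / r)) ^ (1 / ((#t).choose r : ℝ)) =
        ∏ j ∈ S, g j ^ e := by
    intro S _
    rw [← prod_rpow_of_nonneg (by positivity)]
    exact prod_congr rfl fun j _ => (rpow_mul _ _ _).symm
  rw [prod_congr rfl hfactor,
    prod_comm' (t' := t) (s' := fun j => (t.powersetCard r).filter (j ∈ ·))
      (fun S j => by simpa using fun hS _ hj => hS hj)]
  refine prod_congr rfl fun j hj => ?_
  rw [prod_const, card_filter_mem_powersetCard hj hr, ← rpow_natCast, ← rpow_mul,
    div_mul_one_div_choose_mul_choose_pred hr hrt, rpow_one]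

theorem lintegral_prod_le_prod_powersetCard {X ι : Type*} [MeasurableSpace X] {μ : Measure X}
    (t : Finset ι) {r : ℕ} (hr : 1 ≤ r) (hrt : r ≤ #t) {g : ι → X → ℝ≥0∞}
    (hg : ∀ j ∈ t, AEMeasurable (g j) μ) :
    ∫⁻ x, ∏ j ∈ t, g j x ∂μ ≤
      ∏ S ∈ t.powersetCard r,
        (∫⁻ x, ∏ j ∈ S, g j x ^ ((#t : ℝ) / r) ∂μ) ^ (1 / ((#t).choose r : ℝ)) := by
  have hmeas : ∀ S ∈ t.powersetCard r,
      AEMeasurable (fun x => ∏ j ∈ S, g j x ^ ((#t : ℝ) / r)) μ :=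
    fun S hS => S.aemeasurable_fun_prod fun j hj =>
      (hg j ((mem_powersetCard.1 hS).1 hj)).pow_const _
  have hweights : ∑ _S ∈ t.powersetCard r, 1 / ((#t).choose r : ℝ) = 1 := by
    have hpos : ((#t).choose r : ℝ) ≠ 0 := by exact_mod_cast (Nat.choose_pos hrt).ne'
    rw [sum_const, card_powersetCard, nsmul_eq_mul]
    field_simp
  calc ∫⁻ x, ∏ j ∈ t, g j x ∂μ
      = ∫⁻ x, ∏ S ∈ t.powersetCard r,
          (∏ j ∈ S, g j x ^ ((#t : ℝ) / r)) ^ (1 / ((#t).choose r : ℝ)) ∂μ :=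
        lintegral_congr fun x => prod_eq_prod_powersetCard_rpow t hr hrt (g · x)
    _ ≤ _ := lintegral_prod_norm_pow_le _ hmeas hweights fun _ _ => by positivity

/-- Generalized Hölder inequality: for a measure space `(X, λ)`, `1 ≤ r ≤ ℓ`, and measurable
`F_1, …, F_ℓ : X → ℂ`, we have
`∫ ∏ |F_j| dλ ≤ ∏_{S ⊆ [ℓ], |S| = r} (∫ ∏_{j ∈ S} |F_j|^(ℓ/r) dλ)^(1/C(ℓ,r))`. -/
theorem generalized_holder {X : Type*} [MeasurableSpace X] (lam : Measure X)
    (ℓ r : ℕ) (hr : 1 ≤ r) (hrl : r ≤ ℓ)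
    (F : Fin ℓ → X → ℂ) (hF : ∀ j, Measurable (F j)) :
    ∫⁻ x, ∏ j, ENNReal.ofReal ‖F j x‖ ∂lam ≤
      ∏ S ∈ (Finset.univ : Finset (Fin ℓ)).powersetCard r,
        (∫⁻ x, ∏ j ∈ S, ENNReal.ofReal ‖F j x‖ ^ ((ℓ : ℝ) / (r : ℝ)) ∂lam) ^
          (1 / (Nat.choose ℓ r : ℝ)) := by
  simpa only [card_univ, Fintype.card_fin] using
    lintegral_prod_le_prod_powersetCard (μ := lam) (g := fun j x => ENNReal.ofReal ‖F j x‖)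
      univ hr (by simpa using hrl) fun j _ => (measurable_ofReal.comp (hF j).norm).aemeasurable
end

section
/- Smoothed Bohr cutoff properties: Let B = B(Γ, δ) be a Bohr set in 𝕋ⁿ with frequency set Γ of size d and radius δ ∈ (0, 1/2]. Define φ_B(x) = Δ((1/δ) sup_{ξ∈Γ} ‖ξ·x‖) where Δ(t) = max(1−|t|, 0), and ν_B = φ_B / ∫φ_B. Then (i) ‖ν_B‖_∞ ≲ (δ/4)^{−d}; (ii) for every ρ ∈ (0,1] and every t ∈ B(Γ, ρδ), ‖ν_B(·+t) − ν_B‖_∞ ≲ (δ/4)^{−d} ρ; (iii) for every ξ ∈ Γ, the Fourier coefficient ν̂_B(ξ) = 1 + O(δ). -/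
/-!
Write `‖x‖_Γ = max_{ξ ∈ Γ} ‖ξ · x‖`; it is subadditive, so `φ_B = max (1 - ‖·‖_Γ / δ) 0` is
bounded by `1` and satisfies `|φ_B (x + t) - φ_B x| ≤ ‖t‖_Γ / δ`. Parts (i) and (ii) therefore
reduce to the lower bound `∫ φ_B ≥ |B(Γ, δ/2)| / 2 ≥ (δ/4)^d / 2`. The measure bound is a
pigeonhole argument: cut `𝕋` into `M = ⌈2/δ⌉` arcs of length `1/M` and sort the points `x` by the
arcs containing the `ξ · x`; some of the `M^d` cells has measure at least `M^{-d} ≥ (δ/4)^d`, and its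
translate by one of its own points lies in `B(Γ, 1/M) ⊆ B(Γ, δ/2)`.
For (iii), `ν̂_B(ξ) - 1 = ∫ ν_B(x) (e(-ξ · x) - 1) dx` because `∫ ν_B = 1`, and on the support of
`ν_B` one has `|e(-ξ · x) - 1| ≤ 2π ‖ξ · x‖ ≤ 2πδ`.
-/

open MeasureTheory Real
open scoped NNReal ENNReal

noncomputable section

section BohrNorm

variable {G ι : Type*} [AddGroup G] (χ : ι → G →+ AddCircle (1 : ℝ)) (Γ : Finset ι)

def bohrNorm (x : G) : ℝ := (Γ.sup fun ξ => ‖χ ξ x‖₊ : ℝ≥0)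

def bohrCutoff (δ : ℝ) (x : G) : ℝ := max (1 - δ⁻¹ * bohrNorm χ Γ x) 0

variable {χ Γ}

lemma bohrNorm_nonneg (x : G) : 0 ≤ bohrNorm χ Γ x := NNReal.coe_nonneg _

lemma bohrNorm_le_iff {x : G} {c : ℝ} (hc : 0 ≤ c) :
    bohrNorm χ Γ x ≤ c ↔ ∀ ξ ∈ Γ, ‖χ ξ x‖ ≤ c := by
  lift c to ℝ≥0 using hc
  simp only [bohrNorm, NNReal.coe_le_coe, Finset.sup_le_iff, ← coe_nnnorm]

lemma norm_le_bohrNorm {ξ : ι} (hξ : ξ ∈ Γ) (x : G) : ‖χ ξ x‖ ≤ bohrNorm χ Γ x :=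
  (bohrNorm_le_iff (bohrNorm_nonneg x)).1 le_rfl ξ hξ

lemma bohrNorm_neg (x : G) : bohrNorm χ Γ (-x) = bohrNorm χ Γ x := by
  simp only [bohrNorm, map_neg, nnnorm_neg]

lemma bohrNorm_add_le (x y : G) : bohrNorm χ Γ (x + y) ≤ bohrNorm χ Γ x + bohrNorm χ Γ y :=
  (bohrNorm_le_iff (add_nonneg (bohrNorm_nonneg x) (bohrNorm_nonneg y))).2 fun ξ hξ => by
    rw [map_add]
    exact (norm_add_le _ _).trans (add_le_add (norm_le_bohrNorm hξ x) (norm_le_bohrNorm hξ y))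

lemma abs_bohrNorm_add_sub_le (x t : G) :
    |bohrNorm χ Γ (x + t) - bohrNorm χ Γ x| ≤ bohrNorm χ Γ t := by
  have h₁ := bohrNorm_add_le (χ := χ) (Γ := Γ) x t
  have h₂ := bohrNorm_add_le (χ := χ) (Γ := Γ) (x + t) (-t)
  rw [add_neg_cancel_right, bohrNorm_neg] at h₂
  exact abs_sub_le_iff.2 ⟨by linarith, by linarith⟩

lemma measurable_bohrNorm [MeasurableSpace G] (hχ : ∀ ξ, Measurable (χ ξ)) :
    Measurable (bohrNorm χ Γ) := by
  have : Measurable (Γ.sup fun ξ x => ‖χ ξ x‖₊) :=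
    Finset.sup_induction measurable_const (fun _ hf _ hg => hf.sup hg)
      fun ξ _ => (hχ ξ).nnnorm
  convert measurable_coe_nnreal_real.comp this using 1
  ext x
  simp only [bohrNorm, Function.comp_apply, Finset.sup_apply]

variable {δ : ℝ}

lemma bohrCutoff_nonneg (x : G) : 0 ≤ bohrCutoff χ Γ δ x := le_max_right _ _

lemma bohrCutoff_le_one (hδ : 0 ≤ δ) (x : G) : bohrCutoff χ Γ δ x ≤ 1 :=
  max_le (by nlinarith [mul_nonneg (inv_nonneg.2 hδ) (bohrNorm_nonneg (χ := χ) (Γ := Γ) x)])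
    zero_le_one

lemma abs_bohrCutoff_add_sub_le (hδ : 0 ≤ δ) (x t : G) :
    |bohrCutoff χ Γ δ (x + t) - bohrCutoff χ Γ δ x| ≤ δ⁻¹ * bohrNorm χ Γ t :=
  calc |bohrCutoff χ Γ δ (x + t) - bohrCutoff χ Γ δ x|
      ≤ |(1 - δ⁻¹ * bohrNorm χ Γ (x + t)) - (1 - δ⁻¹ * bohrNorm χ Γ x)| :=
        abs_max_sub_max_le_abs _ _ _
    _ = δ⁻¹ * |bohrNorm χ Γ (x + t) - bohrNorm χ Γ x| := by
        rw [← abs_of_nonneg (inv_nonneg.2 hδ), ← abs_mul, abs_of_nonneg (inv_nonneg.2 hδ),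
          abs_sub_comm]
        ring_nf
    _ ≤ δ⁻¹ * bohrNorm χ Γ t := by gcongr; exact abs_bohrNorm_add_sub_le x t

lemma bohrNorm_lt_of_bohrCutoff_ne_zero (hδ : 0 < δ) {x : G} (hx : bohrCutoff χ Γ δ x ≠ 0) :
    bohrNorm χ Γ x < δ := by
  have : 0 < 1 - δ⁻¹ * bohrNorm χ Γ x := by
    by_contra! h
    exact hx (max_eq_right h)
  rwa [sub_pos, inv_mul_lt_iff₀ hδ, mul_one] at this

lemma half_le_bohrCutoff (hδ : 0 < δ) {x : G} (hx : bohrNorm χ Γ x ≤ δ / 2) :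
    1 / 2 ≤ bohrCutoff χ Γ δ x := by
  refine le_max_of_le_left ?_
  have : δ⁻¹ * bohrNorm χ Γ x ≤ 1 / 2 := by
    rw [inv_mul_le_iff₀ hδ]; linarith
  linarith

lemma measurable_bohrCutoff [MeasurableSpace G] (hχ : ∀ ξ, Measurable (χ ξ)) :
    Measurable (bohrCutoff χ Γ δ) :=
  (measurable_const.sub (measurable_const.mul (measurable_bohrNorm hχ))).max measurable_const

lemma integrable_bohrCutoff [MeasurableSpace G] {μ : Measure G} [IsFiniteMeasure μ]
    (hχ : ∀ ξ, Measurable (χ ξ)) (hδ : 0 ≤ δ) :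
    Integrable (bohrCutoff χ Γ δ) μ :=
  Integrable.of_bound (measurable_bohrCutoff hχ).aestronglyMeasurable 1 <| ae_of_all _ fun x => by
    rw [Real.norm_of_nonneg (bohrCutoff_nonneg x)]
    exact bohrCutoff_le_one hδ x

end BohrNorm

namespace AddCircle

variable {T : ℝ} [Fact (0 < T)]

lemma norm_toCircle_sub_one_le (y : AddCircle T) :
    ‖(toCircle y : ℂ) - 1‖ ≤ 2 * π / T * ‖y‖ := by
  have hT : (0 : ℝ) < T := Fact.out
  obtain ⟨a, ha, rfl⟩ : ∃ a : ℝ, |a| ≤ |T| / 2 ∧ (a : AddCircle T) = y := by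
    obtain ⟨h₁, h₂⟩ := (equivIoc T (-(T / 2)) y).2
    rw [abs_of_pos hT]
    exact ⟨_, abs_le.2 ⟨h₁.le, by linarith⟩, (equivIoc T _).symm_apply_apply y⟩
  rw [(norm_coe_eq_abs_iff T hT.ne').2 ha, toCircle_apply_mk, Circle.coe_exp,
    mul_comm _ Complex.I]
  refine Real.norm_exp_I_mul_ofReal_sub_one_le.trans_eq ?_
  rw [Real.norm_eq_abs, abs_mul, abs_of_pos (by positivity)]

end AddCircle

lemma UnitAddCircle.exists_fin_norm_sub_le {M : ℕ} (hM : 0 < M) :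
    ∃ f : AddCircle (1 : ℝ) → Fin M, ∀ y z, f y = f z → ‖y - z‖ ≤ (M : ℝ)⁻¹ := by
  set r : AddCircle (1 : ℝ) → ℝ := fun y => AddCircle.equivIco 1 0 y
  have hr : ∀ y, 0 ≤ r y ∧ r y < 1 := fun y => by simpa using (AddCircle.equivIco 1 0 y).2
  have hry : ∀ y, (r y : AddCircle (1 : ℝ)) = y := (AddCircle.equivIco 1 0).symm_apply_apply
  have hM' : (0 : ℝ) < M := Nat.cast_pos.2 hM
  have hMr : ∀ y, 0 ≤ M * r y := fun y => mul_nonneg hM'.le (hr y).1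
  refine ⟨fun y => ⟨⌊M * r y⌋₊, ?_⟩, fun y z hyz => ?_⟩
  · rw [Nat.floor_lt (hMr y)]
    nlinarith [hr y]
  · have hfloor : ⌊M * r y⌋₊ = ⌊M * r z⌋₊ := congrArg Fin.val hyz
    have hy₁ := Nat.floor_le (hMr y)
    have hy₂ := Nat.lt_floor_add_one (M * r y)
    have hz₁ := Nat.floor_le (hMr z)
    have hz₂ := Nat.lt_floor_add_one (M * r z)
    rw [hfloor] at hy₁ hy₂
    have hMdiff : |M * r y - M * r z| ≤ 1 := abs_le.2 ⟨by linarith, by linarith⟩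
    have hdiff : |r y - r z| ≤ (M : ℝ)⁻¹ :=
      calc |r y - r z| = (M : ℝ)⁻¹ * |M * r y - M * r z| := by
            rw [← mul_sub, abs_mul, abs_of_pos hM', inv_mul_cancel_left₀ hM'.ne']
        _ ≤ (M : ℝ)⁻¹ := mul_le_of_le_one_right (inv_nonneg.2 hM'.le) hMdiff
    rw [← hry y, ← hry z, ← AddCircle.coe_sub]
    exact QuotientAddGroup.norm_mk_le_norm.trans hdiff

lemma exists_inv_card_le_measure_preimage {Ω α : Type*} [MeasurableSpace Ω] (μ : Measure Ω)
    [IsProbabilityMeasure μ] [Fintype α] [Nonempty α] (f : Ω → α) :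
    ∃ a, (Fintype.card α : ℝ≥0∞)⁻¹ ≤ μ (f ⁻¹' {a}) := by
  have hcover : ∑ _a : α, (Fintype.card α : ℝ≥0∞)⁻¹ ≤ ∑ a, μ (f ⁻¹' {a}) :=
    calc ∑ _a : α, (Fintype.card α : ℝ≥0∞)⁻¹ = μ Set.univ := by
          rw [Finset.sum_const, Finset.card_univ, nsmul_eq_mul,
            ENNReal.mul_inv_cancel (by simp) (by simp), measure_univ]
      _ = μ (⋃ a ∈ Finset.univ, f ⁻¹' {a}) := by congr 1; ext x; simp
      _ ≤ ∑ a, μ (f ⁻¹' {a}) := measure_biUnion_finset_le _ _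
  obtain ⟨a, -, ha⟩ := ENNReal.exists_le_of_sum_le Finset.univ_nonempty hcover
  exact ⟨a, ha⟩

lemma inv_card_le_measure_of_sub_mem {G α : Type*} [AddGroup G] [MeasurableSpace G]
    [MeasurableAdd G] (μ : Measure G) [IsProbabilityMeasure μ] [μ.IsAddRightInvariant]
    [Fintype α] [Nonempty α] (f : G → α) {B : Set G} (hB : ∀ x y, f x = f y → x - y ∈ B) :
    (Fintype.card α : ℝ≥0∞)⁻¹ ≤ μ B := by
  obtain ⟨a, ha⟩ := exists_inv_card_le_measure_preimage μ f
  obtain ⟨x₀, hx₀⟩ : (f ⁻¹' {a}).Nonempty :=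
    nonempty_of_measure_ne_zero (ne_bot_of_le_ne_bot (by simp) ha)
  calc (Fintype.card α : ℝ≥0∞)⁻¹ ≤ μ (f ⁻¹' {a}) := ha
    _ = μ ((· + x₀) ⁻¹' (f ⁻¹' {a})) := (measure_preimage_add_right μ x₀ _).symm
    _ ≤ μ B := measure_mono fun z hz => by
        simpa using hB (z + x₀) x₀ (hz.trans hx₀.symm)

lemma norm_integral_ofReal_mul_sub_one_le {Ω : Type*} [MeasurableSpace Ω] {μ : Measure Ω}
    {ν : Ω → ℝ} {g : Ω → ℂ} {ε : ℝ} (hν : ∀ x, 0 ≤ ν x) (hνi : Integrable ν μ)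
    (hν1 : ∫ x, ν x ∂μ = 1) (hg : AEStronglyMeasurable g μ)
    (hgν : ∀ x, ν x ≠ 0 → ‖g x - 1‖ ≤ ε) :
    ‖∫ x, (ν x : ℂ) * g x ∂μ - 1‖ ≤ ε := by
  have hbound : ∀ x, ‖(ν x : ℂ) * (g x - 1)‖ ≤ ε * ν x := fun x => by
    rcases eq_or_ne (ν x) 0 with h | h
    · simp [h]
    · rw [norm_mul, Complex.norm_real, Real.norm_of_nonneg (hν x), mul_comm]
      exact mul_le_mul_of_nonneg_right (hgν x h) (hν x)
  have hνc : Integrable (fun x => (ν x : ℂ)) μ := hνi.ofReal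
  have hi : Integrable (fun x => (ν x : ℂ) * (g x - 1)) μ :=
    (hνi.const_mul ε).mono' (hνc.aestronglyMeasurable.mul (hg.sub aestronglyMeasurable_const))
      (ae_of_all _ hbound)
  have hsplit : ∫ x, (ν x : ℂ) * g x ∂μ - 1 = ∫ x, (ν x : ℂ) * (g x - 1) ∂μ := by
    have h₁ : ∫ x, (ν x : ℂ) ∂μ = 1 := by rw [integral_complex_ofReal, hν1, Complex.ofReal_one]
    have h₂ : (fun x => (ν x : ℂ) * g x) = fun x => (ν x : ℂ) * (g x - 1) + ν x := by
      ext x; ring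
    rw [h₂, integral_add hi hνc, h₁, add_sub_cancel_right]
  rw [hsplit]
  calc ‖∫ x, (ν x : ℂ) * (g x - 1) ∂μ‖ ≤ ∫ x, ε * ν x ∂μ :=
        norm_integral_le_of_norm_le (hνi.const_mul ε) (ae_of_all _ hbound)
    _ = ε := by rw [integral_const_mul, hν1, mul_one]

section BohrDensity

variable {G ι : Type*} [AddGroup G] [MeasurableSpace G]

variable (χ : ι → G →+ AddCircle (1 : ℝ)) (Γ : Finset ι) (μ : Measure G) (δ : ℝ) in
def bohrDensity (x : G) : ℝ := bohrCutoff χ Γ δ x / ∫ y, bohrCutoff χ Γ δ y ∂μ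

variable [MeasurableAdd G] {χ : ι → G →+ AddCircle (1 : ℝ)} {Γ : Finset ι} {μ : Measure G}
  [IsProbabilityMeasure μ] [μ.IsAddRightInvariant] {δ : ℝ}

lemma inv_pow_le_measure_bohrNorm_le {M : ℕ} (hM : 0 < M) :
    ((M : ℝ≥0∞)⁻¹) ^ Γ.card ≤ μ {x | bohrNorm χ Γ x ≤ (M : ℝ)⁻¹} := by
  classical
  have : NeZero M := ⟨hM.ne'⟩
  obtain ⟨p, hp⟩ := UnitAddCircle.exists_fin_norm_sub_le hM
  have hcell := inv_card_le_measure_of_sub_mem μ (fun x (ξ : Γ) => p (χ ξ x))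
    (B := {x | bohrNorm χ Γ x ≤ (M : ℝ)⁻¹}) fun x y hxy => by
      refine (bohrNorm_le_iff (by positivity)).2 fun ξ hξ => ?_
      rw [map_sub]
      exact hp _ _ (congrFun hxy ⟨ξ, hξ⟩)
  simpa [Fintype.card_fun, ENNReal.inv_pow] using hcell

lemma pow_le_measureReal_bohrNorm_le (hδ : 0 < δ) (hδ2 : δ ≤ 2) :
    (δ / 4) ^ Γ.card ≤ μ.real {x | bohrNorm χ Γ x ≤ δ / 2} := by
  set M := ⌈2 / δ⌉₊
  have h2δ : 2 / δ ≤ M := Nat.le_ceil _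
  have hM : 0 < M := Nat.ceil_pos.2 (by positivity)
  have hM' : (0 : ℝ) < M := Nat.cast_pos.2 hM
  have hMδ : (M : ℝ) ≤ 4 / δ := by
    have h1 : 1 ≤ 2 / δ := by rw [le_div_iff₀ hδ]; linarith
    have := Nat.ceil_lt_add_one (show 0 ≤ 2 / δ by positivity)
    linarith [show 4 / δ = 2 / δ + 2 / δ by ring]
  have hMinv : (M : ℝ)⁻¹ ≤ δ / 2 := by
    rw [inv_le_comm₀ hM' (by positivity), inv_div]; exact h2δ
  have hδM : δ / 4 ≤ (M : ℝ)⁻¹ := by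
    rw [le_inv_comm₀ (by positivity) hM', inv_div]; exact hMδ
  calc (δ / 4) ^ Γ.card ≤ ((M : ℝ)⁻¹) ^ Γ.card := by gcongr
    _ = (((M : ℝ≥0∞)⁻¹) ^ Γ.card).toReal := by simp [ENNReal.toReal_inv]
    _ ≤ μ.real {x | bohrNorm χ Γ x ≤ (M : ℝ)⁻¹} :=
        ENNReal.toReal_mono (measure_ne_top _ _) (inv_pow_le_measure_bohrNorm_le hM)
    _ ≤ μ.real {x | bohrNorm χ Γ x ≤ δ / 2} :=
        measureReal_mono fun x hx => le_trans hx hMinv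

lemma le_integral_bohrCutoff (hχ : ∀ ξ, Measurable (χ ξ)) (hδ : 0 < δ) (hδ2 : δ ≤ 2) :
    (δ / 4) ^ Γ.card / 2 ≤ ∫ x, bohrCutoff χ Γ δ x ∂μ := by
  set B := {x | bohrNorm χ Γ x ≤ δ / 2}
  have hB : MeasurableSet B := measurable_bohrNorm hχ measurableSet_Iic
  calc (δ / 4) ^ Γ.card / 2 ≤ μ.real B • (1 / 2 : ℝ) := by
        rw [smul_eq_mul, ← div_eq_mul_one_div]
        exact div_le_div_of_nonneg_right (pow_le_measureReal_bohrNorm_le hδ hδ2) zero_le_two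
    _ = ∫ x, B.indicator (fun _ => (1 / 2 : ℝ)) x ∂μ := (integral_indicator_const _ hB).symm
    _ ≤ ∫ x, bohrCutoff χ Γ δ x ∂μ := by
        refine integral_mono ((integrable_const _).indicator hB) (integrable_bohrCutoff hχ hδ.le)
          fun x => ?_
        by_cases hx : x ∈ B
        · simpa [Set.indicator_of_mem hx] using half_le_bohrCutoff hδ hx
        · simpa [Set.indicator_of_notMem hx] using bohrCutoff_nonneg x

lemma inv_integral_bohrCutoff_le (hχ : ∀ ξ, Measurable (χ ξ)) (hδ : 0 < δ) (hδ2 : δ ≤ 2) :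
    (∫ x, bohrCutoff χ Γ δ x ∂μ)⁻¹ ≤ 2 * ((δ / 4) ^ Γ.card)⁻¹ :=
  calc (∫ x, bohrCutoff χ Γ δ x ∂μ)⁻¹ ≤ ((δ / 4) ^ Γ.card / 2)⁻¹ :=
        inv_anti₀ (by positivity) (le_integral_bohrCutoff hχ hδ hδ2)
    _ = 2 * ((δ / 4) ^ Γ.card)⁻¹ := by rw [inv_div, div_eq_mul_inv]

lemma bohrDensity_le (hχ : ∀ ξ, Measurable (χ ξ)) (hδ : 0 < δ) (hδ2 : δ ≤ 2) (x : G) :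
    bohrDensity χ Γ μ δ x ≤ 2 * ((δ / 4) ^ Γ.card)⁻¹ := by
  have hI : 0 ≤ (∫ x, bohrCutoff χ Γ δ x ∂μ)⁻¹ :=
    inv_nonneg.2 (integral_nonneg bohrCutoff_nonneg)
  calc bohrDensity χ Γ μ δ x ≤ 1 * (∫ x, bohrCutoff χ Γ δ x ∂μ)⁻¹ :=
        mul_le_mul_of_nonneg_right (bohrCutoff_le_one hδ.le x) hI
    _ ≤ 2 * ((δ / 4) ^ Γ.card)⁻¹ := by
        rw [one_mul]; exact inv_integral_bohrCutoff_le hχ hδ hδ2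

lemma abs_bohrDensity_add_sub_le (hχ : ∀ ξ, Measurable (χ ξ)) (hδ : 0 < δ) (hδ2 : δ ≤ 2)
    (x t : G) :
    |bohrDensity χ Γ μ δ (x + t) - bohrDensity χ Γ μ δ x| ≤
      2 * ((δ / 4) ^ Γ.card)⁻¹ * (δ⁻¹ * bohrNorm χ Γ t) := by
  have hI : 0 ≤ (∫ x, bohrCutoff χ Γ δ x ∂μ)⁻¹ :=
    inv_nonneg.2 (integral_nonneg bohrCutoff_nonneg)
  rw [bohrDensity, bohrDensity, ← sub_div, div_eq_mul_inv, abs_mul, abs_of_nonneg hI, mul_comm]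
  exact mul_le_mul (inv_integral_bohrCutoff_le hχ hδ hδ2) (abs_bohrCutoff_add_sub_le hδ.le x t)
    (abs_nonneg _) (by positivity)

lemma integral_bohrDensity (hχ : ∀ ξ, Measurable (χ ξ)) (hδ : 0 < δ) (hδ2 : δ ≤ 2) :
    ∫ x, bohrDensity χ Γ μ δ x ∂μ = 1 := by
  have hI : 0 < ∫ x, bohrCutoff χ Γ δ x ∂μ :=
    lt_of_lt_of_le (by positivity) (le_integral_bohrCutoff hχ hδ hδ2)
  simp only [bohrDensity, integral_div, div_self hI.ne']

lemma norm_integral_bohrDensity_mul_toCircle_sub_one_le (hχ : ∀ ξ, Measurable (χ ξ))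
    (hδ : 0 < δ) (hδ2 : δ ≤ 2) {ξ : ι} (hξ : ξ ∈ Γ) :
    ‖∫ x, (bohrDensity χ Γ μ δ x : ℂ) * (AddCircle.toCircle (-χ ξ x) : ℂ) ∂μ - 1‖ ≤
      2 * π * δ := by
  refine norm_integral_ofReal_mul_sub_one_le (fun x => div_nonneg (bohrCutoff_nonneg x)
    (integral_nonneg bohrCutoff_nonneg)) ?_ (integral_bohrDensity hχ hδ hδ2) ?_ fun x hx => ?_
  · exact (integrable_bohrCutoff hχ hδ.le).div_const _
  · exact (continuous_subtype_val.comp AddCircle.continuous_toCircle).comp_aestronglyMeasurable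
      (hχ ξ).neg.aestronglyMeasurable
  · have hx' : bohrNorm χ Γ x < δ :=
      bohrNorm_lt_of_bohrCutoff_ne_zero hδ (left_ne_zero_of_mul hx)
    calc ‖(AddCircle.toCircle (-χ ξ x) : ℂ) - 1‖ ≤ 2 * π / 1 * ‖-χ ξ x‖ :=
          AddCircle.norm_toCircle_sub_one_le _
      _ ≤ 2 * π * δ := by
          rw [div_one, norm_neg]
          gcongr
          exact (norm_le_bohrNorm hξ x).trans hx'.le

end BohrDensity

def dotChar {n : ℕ} (ξ : Fin n → ℤ) : (Fin n → AddCircle (1 : ℝ)) →+ AddCircle (1 : ℝ) where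
  toFun x := ∑ i, ξ i • x i
  map_zero' := by simp
  map_add' x y := by simp only [Pi.add_apply, smul_add, Finset.sum_add_distrib]

lemma measurable_dotChar {n : ℕ} (ξ : Fin n → ℤ) : Measurable (dotChar ξ) := by
  change Measurable fun x : Fin n → AddCircle (1 : ℝ) => ∑ i, ξ i • x i
  exact Continuous.measurable (by fun_prop)

instance {n : ℕ} : IsProbabilityMeasure (volume : Measure (Fin n → AddCircle (1 : ℝ))) := by
  have : IsProbabilityMeasure (volume : Measure (AddCircle (1 : ℝ))) :=
    ⟨UnitAddCircle.measure_univ⟩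
  rw [volume_pi]
  infer_instance

/-- Smoothed Bohr cutoff properties: for a Bohr set `B(Γ,δ)` in `𝕋ⁿ` with `|Γ| = d` and
`δ ∈ (0,1/2]`, setting `φ_B(x) = Δ(δ⁻¹ sup_{ξ∈Γ} ‖ξ·x‖)` with `Δ(t) = max(1−|t|,0)` and
`ν_B = φ_B / ∫ φ_B`, one has (i) `‖ν_B‖_∞ ≲ (δ/4)^{−d}`, (ii) for `ρ ∈ (0,1]` and
`t ∈ B(Γ,ρδ)`, `‖ν_B(·+t) − ν_B‖_∞ ≲ (δ/4)^{−d} ρ`, and (iii) for `ξ ∈ Γ`,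
`ν̂_B(ξ) = 1 + O(δ)`, with absolute implicit constants. -/
theorem smoothed_bohr_cutoff :
    ∃ C : ℝ, 0 < C ∧
    ∀ (n : ℕ) (Γ : Finset (Fin n → ℤ)) (δ : ℝ), 0 < δ → δ ≤ 1 / 2 →
    ∀ φ ν : (Fin n → AddCircle (1 : ℝ)) → ℝ,
      (∀ x, φ x = max (1 - δ⁻¹ * ((Γ.sup fun ξ => ‖∑ i, ξ i • x i‖₊ : NNReal) : ℝ)) 0) →
      (∀ x, ν x = φ x / ∫ y, φ y) →
      ((∀ x, ν x ≤ C * ((δ / 4) ^ Γ.card)⁻¹) ∧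
       (∀ ρ : ℝ, 0 < ρ → ρ ≤ 1 →
         ∀ t : Fin n → AddCircle (1 : ℝ), (∀ ξ ∈ Γ, ‖∑ i, ξ i • t i‖ ≤ ρ * δ) →
         ∀ x, |ν (x + t) - ν x| ≤ C * ((δ / 4) ^ Γ.card)⁻¹ * ρ) ∧
       (∀ ξ ∈ Γ,
         ‖(∫ x, (ν x : ℂ) * (AddCircle.toCircle (-(∑ i, ξ i • x i)) : ℂ)) - 1‖ ≤ C * δ)) := by
  refine ⟨7, by norm_num, fun n Γ δ hδ hδ2 φ ν hφ hν => ?_⟩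
  obtain rfl : φ = bohrCutoff dotChar Γ δ := funext hφ
  obtain rfl : ν = bohrDensity dotChar Γ volume δ := funext hν
  have hδ2' : δ ≤ 2 := by linarith
  refine ⟨fun x => ?_, fun ρ hρ _ t ht x => ?_, fun ξ hξ => ?_⟩
  · calc _ ≤ 2 * ((δ / 4) ^ Γ.card)⁻¹ := bohrDensity_le measurable_dotChar hδ hδ2' x
      _ ≤ 7 * ((δ / 4) ^ Γ.card)⁻¹ := by gcongr; norm_num
  · have ht' : δ⁻¹ * bohrNorm dotChar Γ t ≤ ρ := by
      rw [inv_mul_le_iff₀ hδ, mul_comm]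
      exact (bohrNorm_le_iff (by positivity)).2 ht
    calc _ ≤ 2 * ((δ / 4) ^ Γ.card)⁻¹ * (δ⁻¹ * bohrNorm dotChar Γ t) :=
          abs_bohrDensity_add_sub_le measurable_dotChar hδ hδ2' x t
      _ ≤ 7 * ((δ / 4) ^ Γ.card)⁻¹ * ρ := by
          gcongr
          · exact mul_nonneg (inv_nonneg.2 hδ.le) (bohrNorm_nonneg t)
          · norm_num
  · calc _ ≤ 2 * π * δ :=
          norm_integral_bohrDensity_mul_toCircle_sub_one_le measurable_dotChar hδ hδ2' hξ
      _ ≤ 7 * δ := by gcongr; linarith [pi_lt_d2]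
end
end

section
/- Periodization Fourier bound: Let f : ℝⁿ → ℂ be a bounded measurable function supported in [−1/4, 1/4]ⁿ whose Fourier coefficients f̂(k) = ∫ f(x) e(−k·x) dx for k ∈ ℤⁿ satisfy sup_{k ∈ ℤⁿ} |f̂(k)| ≤ M. Then sup_{ξ ∈ ℝⁿ} |f̂(ξ)| ≤ C_n M for a constant C_n depending only on n, where f̂(ξ) = ∫_{ℝⁿ} f(x) e(−ξ·x) dx. -/
/-!
Fix a smooth cutoff `χ` equal to `1` on `[-1/4, 1/4]` and vanishing outside `(-1/2, 1/2)`.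
Poisson summation for `y ↦ χ y e(-ξ y)` gives, for `|x| ≤ 1/4`, the expansion
`e(-ξ x) = ∑ₖ χ̂(ξ - k) e(-k x)`, and since `χ̂` is a Schwartz function,
`∑ₖ |χ̂(ξ - k)| ≤ S` uniformly in `ξ`. Multiplying over the coordinates expands `e(-ξ·x)` on the
cube as `∑_K a_K e(-K·x)` with `∑_K |a_K| ≤ Sⁿ`; integrating against `f` gives
`f̂(ξ) = ∑_K a_K f̂(K)`, hence `|f̂(ξ)| ≤ Sⁿ M`.
-/

open MeasureTheory Real FourierTransform Complex
open scoped ContDiff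

theorem summable_norm_prod_pi {R κ : Type*} [NormedCommRing R] :
    ∀ {n : ℕ} {F : Fin n → κ → R}, (∀ i, Summable fun k => ‖F i k‖) →
      Summable fun K : Fin n → κ => ‖∏ i, F i (K i)‖
  | 0, _, _ => .of_finite
  | n + 1, F, hF => by
    rw [← (Fin.consEquiv fun _ => κ).summable_iff]
    refine ((hF 0).mul_norm (summable_norm_prod_pi fun i => hF i.succ)).congr fun p => ?_
    rw [Function.comp_apply, Fin.prod_univ_succ]
    rfl

theorem hasSum_prod_pi {R κ : Type*} [NormedCommRing R] [CompleteSpace R] :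
    ∀ {n : ℕ} {F : Fin n → κ → R}, (∀ i, Summable fun k => ‖F i k‖) →
      HasSum (fun K : Fin n → κ => ∏ i, F i (K i)) (∏ i, ∑' k, F i k)
  | 0, _, _ => by simp
  | n + 1, F, hF => by
    have htail := summable_norm_prod_pi fun i => hF i.succ
    rw [← (Fin.consEquiv fun _ => κ).hasSum_iff, Fin.prod_univ_succ fun i => ∑' k, F i k,
      ← (hasSum_prod_pi fun i => hF i.succ).tsum_eq, tsum_mul_tsum_of_summable_norm (hF 0) htail]
    exact ((hF 0).mul_norm htail).of_norm.hasSum.congr_fun fun p => Fin.prod_univ_succ _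

theorem one_add_abs_le_two_mul {θ : ℝ} (hθ : |θ| ≤ 1 / 2) (y : ℝ) :
    1 + |y| ≤ 2 * (1 + |θ + y|) := by
  have := abs_sub_abs_le_abs_sub y (-θ)
  rw [abs_neg, sub_neg_eq_add, add_comm] at this
  linarith [abs_nonneg (θ + y)]

theorem summable_one_div_one_add_abs_sq :
    Summable fun j : ℤ => 1 / (1 + |(j : ℝ)|) ^ 2 := by
  refine .of_norm_bounded_eventually (summable_one_div_int_pow.mpr one_lt_two) ?_
  filter_upwards [(Set.finite_singleton (0 : ℤ)).compl_mem_cofinite] with j hj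
  have hj : (j : ℝ) ≠ 0 := by exact_mod_cast hj
  rw [Real.norm_of_nonneg (by positivity), ← sq_abs (j : ℝ)]
  exact one_div_le_one_div_of_le (by positivity) (by gcongr; linarith)

theorem SchwartzMap.exists_norm_le_div_one_add_abs_sq {E : Type*} [NormedAddCommGroup E]
    [NormedSpace ℝ E] (φ : SchwartzMap ℝ E) :
    ∃ C > 0, ∀ u : ℝ, ‖φ u‖ ≤ C / (1 + |u|) ^ 2 := by
  set C := 2 ^ 2 * (Finset.Iic (2, 0)).sup (fun m => SchwartzMap.seminorm ℝ m.1 m.2) φ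
  refine ⟨C + 1, by positivity, fun u => ?_⟩
  have h : (1 + ‖u‖) ^ 2 * ‖iteratedFDeriv ℝ 0 φ u‖ ≤ C :=
    SchwartzMap.one_add_le_sup_seminorm_apply (m := (2, 0)) le_rfl le_rfl φ u
  rw [norm_iteratedFDeriv_zero, Real.norm_eq_abs] at h
  rw [le_div_iff₀' (by positivity)]
  linarith

theorem SchwartzMap.exists_tsum_norm_sub_int_le {E : Type*} [NormedAddCommGroup E]
    [NormedSpace ℝ E] (φ : SchwartzMap ℝ E) :
    ∃ S > 0, ∀ t : ℝ, Summable (fun k : ℤ => ‖φ (t - k)‖) ∧ ∑' k : ℤ, ‖φ (t - k)‖ ≤ S := by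
  obtain ⟨C, hC, hφ⟩ := φ.exists_norm_le_div_one_add_abs_sq
  set b : ℤ → ℝ := fun j => 4 * C * (1 / (1 + |(j : ℝ)|) ^ 2)
  have hb : Summable b := summable_one_div_one_add_abs_sq.mul_left (4 * C)
  refine ⟨∑' j, b j, hb.tsum_pos (fun j => by positivity) 0 (by positivity), fun t => ?_⟩
  -- `t - k = θ + (m - k)` with `m = round t` and `|θ| ≤ 1/2`, so `φ (t - k)` decays in `m - k`
  set m := round t
  have hle (k : ℤ) : ‖φ (t - k)‖ ≤ b (m - k) := by
    have h := one_add_abs_le_two_mul (abs_sub_round t) ((m - k : ℤ) : ℝ)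
    push_cast at h
    rw [sub_add_sub_cancel] at h
    calc ‖φ (t - k)‖ ≤ C / (1 + |t - k|) ^ 2 := hφ _
      _ ≤ C / ((1 + |(m - k : ℝ)|) / 2) ^ 2 := by gcongr; linarith
      _ = b (m - k) := by simp only [b]; push_cast; field_simp; ring
  have hb' : Summable fun k : ℤ => b (m - k) := (Equiv.subLeft m).summable_iff.mpr hb
  have hsumm := hb'.of_nonneg_of_le (fun _ => norm_nonneg _) hle
  refine ⟨hsumm, ?_⟩
  calc ∑' k : ℤ, ‖φ (t - k)‖ ≤ ∑' k : ℤ, b (m - k) := hsumm.tsum_le_tsum hle hb'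
    _ = ∑' j, b j := (Equiv.subLeft m).tsum_eq b

theorem Real.fourier_mul_exp (χ : ℝ → ℂ) (ξ η : ℝ) :
    𝓕 (fun y => χ y * cexp (-(2 * π * I) * (ξ * y))) η = 𝓕 χ (ξ + η) := by
  simp only [Real.fourier_eq', RCLike.inner_apply, conj_trivial, smul_eq_mul]
  congr 1 with y
  rw [mul_left_comm, ← Complex.exp_add, mul_comm]
  congr 2
  push_cast
  ring

theorem hasSum_fourier_sub_int_mul_exp {χ : ℝ → ℂ} (hχ : ContDiff ℝ ∞ χ)
    (hχc : HasCompactSupport χ) (ξ : ℝ) {x : ℝ} (hx : ∀ m : ℤ, m ≠ 0 → χ (x + m) = 0) :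
    HasSum (fun k : ℤ => 𝓕 χ (ξ - k) * cexp (-(2 * π * I) * (k * x)))
      (χ x * cexp (-(2 * π * I) * (ξ * x))) := by
  set g : ℝ → ℂ := fun y => χ y * cexp (-(2 * π * I) * (ξ * y))
  have hg : ContDiff ℝ ∞ g :=
    hχ.mul (contDiff_exp.comp (contDiff_const.mul (contDiff_const.mul ofRealCLM.contDiff)))
  have hgc : HasCompactSupport g := hχc.mul_right
  have hpoisson := SchwartzMap.tsum_eq_tsum_fourier (hgc.toSchwartzMap hg) x
  rw [tsum_eq_single 0 fun m hm => by simp [g, hx m hm]] at hpoisson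
  obtain ⟨_, -, hS⟩ : ∃ S > 0, ∀ t : ℝ, Summable (fun k : ℤ => ‖𝓕 χ (t - k)‖) ∧ _ :=
    (𝓕 (hχc.toSchwartzMap hχ)).exists_tsum_norm_sub_int_le
  have hsumm : Summable fun k : ℤ => 𝓕 χ (ξ - k) * cexp (-(2 * π * I) * (k * x)) :=
    .of_norm ((hS ξ).1.congr fun k => by simp [Complex.norm_exp])
  convert hsumm.hasSum using 1
  rw [← (Equiv.neg ℤ).tsum_eq, show χ x * _ = hgc.toSchwartzMap hg (x + (0 : ℤ)) by simp [g],
    hpoisson]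
  refine tsum_congr fun k => ?_
  change 𝓕 g k * _ = _
  rw [Real.fourier_mul_exp, fourier_coe_apply, Equiv.neg_apply, Int.cast_neg, sub_neg_eq_add]
  congr 2
  push_cast
  ring

theorem EuclideanSpace.isCompact_setOf_forall_abs_le {ι : Type*} [Fintype ι] (r : ℝ) :
    IsCompact {x : EuclideanSpace ℝ ι | ∀ i, |x i| ≤ r} := by
  convert (EuclideanSpace.equiv ι ℝ).toHomeomorph.isCompact_preimage.mpr
    (isCompact_univ_pi fun _ : ι => isCompact_Icc (a := -r) (b := r)) using 1
  ext x
  simp only [Set.mem_preimage, Set.mem_univ_pi, Set.mem_Icc, abs_le]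
  rfl

theorem norm_integral_mul_tsum_le {α ι 𝕜 : Type*} [MeasurableSpace α] {μ : Measure α}
    [Countable ι] [RCLike 𝕜] {f : α → 𝕜} (hf : Integrable f μ) {a : ι → 𝕜}
    (ha : Summable fun K => ‖a K‖) {e : ι → α → 𝕜} (he : ∀ K, AEStronglyMeasurable (e K) μ)
    (he_le : ∀ K x, ‖e K x‖ ≤ 1) {M : ℝ} (hM : ∀ K, ‖∫ x, f x * e K x ∂μ‖ ≤ M) :
    ‖∫ x, f x * ∑' K, a K * e K x ∂μ‖ ≤ (∑' K, ‖a K‖) * M := by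
  have hfe (K : ι) : Integrable (fun x => f x * e K x) μ :=
    hf.mul_bdd (he K) (ae_of_all _ (he_le K))
  have hfe_norm (K : ι) : ∫ x, ‖a K * (f x * e K x)‖ ∂μ ≤ ‖a K‖ * ∫ x, ‖f x‖ ∂μ :=
    calc ∫ x, ‖a K * (f x * e K x)‖ ∂μ ≤ ∫ x, ‖a K‖ * ‖f x‖ ∂μ :=
          integral_mono_of_nonneg (ae_of_all _ fun _ => norm_nonneg _) (hf.norm.const_mul _)
            (ae_of_all _ fun x => by
              simp only [norm_mul]
              gcongr
              exact mul_le_of_le_one_right (norm_nonneg _) (he_le K x))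
      _ = ‖a K‖ * ∫ x, ‖f x‖ ∂μ := integral_const_mul _ _
  have hswap : ∫ x, f x * ∑' K, a K * e K x ∂μ = ∑' K, a K * ∫ x, f x * e K x ∂μ := by
    simp_rw [← integral_const_mul]
    rw [integral_tsum_of_summable_integral_norm (fun K => (hfe K).const_mul (a K))
      (.of_nonneg_of_le (fun _ => integral_nonneg fun _ => norm_nonneg _) hfe_norm
        (ha.mul_right _))]
    congr 1 with x
    rw [← tsum_mul_left]
    exact tsum_congr fun K => by ring
  have hterm (K : ι) : ‖a K * ∫ x, f x * e K x ∂μ‖ ≤ ‖a K‖ * M := by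
    rw [norm_mul]; gcongr; exact hM K
  have hterm_summ := Summable.of_nonneg_of_le (fun _ => norm_nonneg _) hterm (ha.mul_right M)
  rw [hswap, ← tsum_mul_right]
  exact (norm_tsum_le_tsum_norm hterm_summ).trans (hterm_summ.tsum_le_tsum hterm (ha.mul_right M))

noncomputable def cutoffBump : ContDiffBump (0 : ℝ) := ⟨1 / 4, 1 / 2, by norm_num, by norm_num⟩

noncomputable def cutoff (y : ℝ) : ℂ := cutoffBump y

theorem contDiff_cutoff : ContDiff ℝ ∞ cutoff :=
  ofRealCLM.contDiff.comp cutoffBump.contDiff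

theorem hasCompactSupport_cutoff : HasCompactSupport cutoff :=
  cutoffBump.hasCompactSupport.comp_left ofReal_zero

theorem cutoff_eq_one {x : ℝ} (hx : |x| ≤ 1 / 4) : cutoff x = 1 := by
  rw [cutoff, cutoffBump.one_of_mem_closedBall (by simpa [cutoffBump] using hx), ofReal_one]

theorem cutoff_add_int_eq_zero {x : ℝ} (hx : |x| ≤ 1 / 4) {m : ℤ} (hm : m ≠ 0) :
    cutoff (x + m) = 0 := by
  have hm1 : (1 : ℝ) ≤ |(m : ℝ)| := by exact_mod_cast Int.one_le_abs hm
  have : |(m : ℝ)| ≤ |x| + |x + m| := by simpa using abs_sub_le (m : ℝ) (x + m) 0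
  rw [cutoff, cutoffBump.zero_of_le_dist (by simp [cutoffBump]; linarith), ofReal_zero]

theorem exists_tsum_norm_fourier_cutoff_sub_int_le :
    ∃ S > 0, ∀ t : ℝ,
      Summable (fun k : ℤ => ‖𝓕 cutoff (t - k)‖) ∧ ∑' k : ℤ, ‖𝓕 cutoff (t - k)‖ ≤ S :=
  (𝓕 (hasCompactSupport_cutoff.toSchwartzMap contDiff_cutoff)).exists_tsum_norm_sub_int_le

theorem hasSum_fourier_cutoff_sub_int_mul_exp (ξ : ℝ) {x : ℝ} (hx : |x| ≤ 1 / 4) :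
    HasSum (fun k : ℤ => 𝓕 cutoff (ξ - k) * cexp (-(2 * π * I) * (k * x)))
      (cexp (-(2 * π * I) * (ξ * x))) := by
  simpa [cutoff_eq_one hx] using hasSum_fourier_sub_int_mul_exp contDiff_cutoff
    hasCompactSupport_cutoff ξ fun m hm => cutoff_add_int_eq_zero hx hm

theorem hasSum_prod_fourier_cutoff_mul_exp {n : ℕ} (ξ x : Fin n → ℝ) (hx : ∀ i, |x i| ≤ 1 / 4) :
    HasSum (fun K : Fin n → ℤ =>
        (∏ i, 𝓕 cutoff (ξ i - K i)) * cexp (-(2 * π * I) * ∑ i, (K i : ℂ) * (x i : ℂ)))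
      (cexp (-(2 * π * I) * ∑ i, (ξ i : ℂ) * (x i : ℂ))) := by
  obtain ⟨_, -, hS⟩ := exists_tsum_norm_fourier_cutoff_sub_int_le
  have h := hasSum_prod_pi
    (F := fun i (k : ℤ) => 𝓕 cutoff (ξ i - k) * cexp (-(2 * π * I) * (k * x i)))
    fun i => (hS (ξ i)).1.congr fun k => by simp [Complex.norm_exp]
  simpa only [(hasSum_fourier_cutoff_sub_int_mul_exp (ξ _) (hx _)).tsum_eq,
    Finset.prod_mul_distrib, ← Complex.exp_sum, ← Finset.mul_sum] using h

theorem periodization_fourier_bound_general (n : ℕ) :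
    ∃ C : ℝ, 0 < C ∧
    ∀ (f : EuclideanSpace ℝ (Fin n) → ℂ) (M : ℝ),
      Measurable f → (∃ R : ℝ, ∀ x, ‖f x‖ ≤ R) →
      (Function.support f ⊆ {x : EuclideanSpace ℝ (Fin n) | ∀ i, |x i| ≤ 1 / 4}) →
      (∀ k : Fin n → ℤ,
        ‖∫ x : EuclideanSpace ℝ (Fin n),
            f x * Complex.exp (-(2 * (π : ℂ) * Complex.I) * (∑ i, (k i : ℂ) * (x i : ℂ)))‖
          ≤ M) →
      ∀ ξ : EuclideanSpace ℝ (Fin n),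
        ‖∫ x : EuclideanSpace ℝ (Fin n),
            f x * Complex.exp (-(2 * (π : ℂ) * Complex.I) * (∑ i, (ξ i : ℂ) * (x i : ℂ)))‖
          ≤ C * M := by
  obtain ⟨S, hS0, hS⟩ := exists_tsum_norm_fourier_cutoff_sub_int_le
  refine ⟨S ^ n, by positivity, fun f M hf ⟨R, hR⟩ hsupp hcoef ξ => ?_⟩
  set a : (Fin n → ℤ) → ℂ := fun K => ∏ i, 𝓕 cutoff (ξ i - K i)
  have ha : HasSum (fun K => ‖a K‖) (∏ i, ∑' k : ℤ, ‖𝓕 cutoff (ξ i - k)‖) := by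
    simpa [a, norm_prod] using hasSum_prod_pi (F := fun i (k : ℤ) => ‖𝓕 cutoff (ξ i - k)‖)
      fun i => by simpa using (hS (ξ i)).1
  have hint : Integrable f :=
    (integrableOn_iff_integrable_of_support_subset hsupp).mp
      (Measure.integrableOn_of_bounded
        (EuclideanSpace.isCompact_setOf_forall_abs_le _).measure_lt_top.ne
        hf.aestronglyMeasurable (ae_of_all _ hR))
  have hexpand : ∫ x, f x * cexp (-(2 * π * I) * ∑ i, (ξ i : ℂ) * (x i : ℂ)) =
      ∫ x, f x * ∑' K, a K * cexp (-(2 * π * I) * ∑ i, (K i : ℂ) * (x i : ℂ)) := by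
    congr 1 with x
    by_cases hx : f x = 0
    · simp [hx]
    · rw [(hasSum_prod_fourier_cutoff_mul_exp ξ x (hsupp hx)).tsum_eq]
  calc _ ≤ (∑' K, ‖a K‖) * M := by
        rw [hexpand]
        exact norm_integral_mul_tsum_le hint ha.summable (fun K => by fun_prop)
          (fun K x => by simp [Complex.norm_exp]) hcoef
    _ ≤ S ^ n * M := by
        rw [ha.tsum_eq, ← Fin.prod_const]
        gcongr
        · exact (norm_nonneg _).trans (hcoef 0)
        · exact (hS _).2

/-- Periodization Fourier bound: there is a constant `C_n` depending only on `n` such that,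
for every bounded measurable `f : ℝⁿ → ℂ` supported in `[−1/4,1/4]ⁿ` whose Fourier
coefficients at integer frequencies are bounded by `M`, the Fourier transform of `f` is
bounded by `C_n M` at every real frequency. -/
theorem periodization_fourier_bound (n : ℕ) (hn : 0 < n) :
    ∃ C : ℝ, 0 < C ∧
    ∀ (f : EuclideanSpace ℝ (Fin n) → ℂ) (M : ℝ),
      Measurable f → (∃ R : ℝ, ∀ x, ‖f x‖ ≤ R) →
      (Function.support f ⊆ {x : EuclideanSpace ℝ (Fin n) | ∀ i, |x i| ≤ 1 / 4}) →
      (∀ k : Fin n → ℤ,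
        ‖∫ x : EuclideanSpace ℝ (Fin n),
            f x * Complex.exp (-(2 * (π : ℂ) * Complex.I) * (∑ i, (k i : ℂ) * (x i : ℂ)))‖
          ≤ M) →
      ∀ ξ : EuclideanSpace ℝ (Fin n),
        ‖∫ x : EuclideanSpace ℝ (Fin n),
            f x * Complex.exp (-(2 * (π : ℂ) * Complex.I) * (∑ i, (ξ i : ℂ) * (x i : ℂ)))‖
          ≤ C * M :=
  periodization_fourier_bound_general n
end

section
/- Diophantine reduction from ℝ to ℤ: Suppose that for all ℓ ≥ 1, d_1, …, d_ℓ ∈ ℕ₀, α_j ∈ ℝ^{d_j}, ε > 0, and N ≥ 1, one has N^{-1} #{ n ∈ ℤ, |n| ≤ N : ‖nʲ α_j‖_{𝕋^{d_j}} ≤ ε for all j ∈ [ℓ] } ≥ c(ε, ℓ, (d_j)) > 0. Then for any fixed c > 0, ℓ ≥ 1, d_j ∈ ℕ₀, ξ_j ∈ ℝ^{d_j}, and ε > 0, the Lebesgue measure of { y ∈ [−c, c] : ‖yʲ ξ_j‖_{𝕋^{d_j}} ≤ ε for all j ∈ [ℓ] } is bounded below by a positive constant depending only on ε, ℓ, c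 and (d_j) (and not on the ξ_j). -/
/-!
Write `y = (n + u) a` with `a = c / N`, an integer `n ∈ [-N, N)` and `u ∈ [0, 1)`. By the
binomial theorem `y ^ (j + 1) ξ` is `(u a) ^ (j + 1) ξ`, which is small once `N` is large, plus
a polynomial `∑ₖ n ^ (k + 1) βₖ(u)` in `n` without constant term. For each fixed `u` the integer
hypothesis, applied to all these coefficient vectors `β(u)` at once, gives at least `c₀ N - 1`
good `n`; integrating over `u ∈ [0, 1)` and rescaling by `a` gives measure at least `c₀ c / 2`.
-/

open MeasureTheory Finset Filter
open scoped ENNReal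

theorem ofReal_le_volume_of_le_card_translates {S : Set ℝ} [DecidablePred (· ∈ S)]
    (hS : MeasurableSet S) (F : Finset ℤ) {k : ℝ}
    (hk : ∀ u ∈ Set.Ico (0 : ℝ) 1, k ≤ #{n ∈ F | (↑n + u : ℝ) ∈ S}) :
    ENNReal.ofReal k ≤ volume S := by
  set T : ℤ → Set ℝ := fun n => (fun u => (n : ℝ) + u) ⁻¹' S
  have hT : ∀ n, MeasurableSet (T n) := fun n => hS.preimage (measurable_const_add _)
  calc ENNReal.ofReal k = ∫⁻ _ in Set.Ico (0 : ℝ) 1, ENNReal.ofReal k := by simp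
    _ ≤ ∫⁻ u in Set.Ico (0 : ℝ) 1, ∑ n ∈ F, (T n).indicator 1 u := by
        refine setLIntegral_mono
          (Finset.measurable_sum _ fun n _ => measurable_one.indicator (hT n)) fun u hu => ?_
        have hcard : ∑ n ∈ F, (T n).indicator 1 u = (#{n ∈ F | (↑n + u : ℝ) ∈ S} : ℝ≥0∞) := by
          rw [card_filter, Nat.cast_sum]
          refine sum_congr rfl fun n _ => ?_
          by_cases h : ↑n + u ∈ S <;> simp [T, h]
        rw [hcard, ← ENNReal.ofReal_natCast]
        exact ENNReal.ofReal_le_ofReal (hk u hu)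
    _ = ∑ n ∈ F, volume (S ∩ Set.Ico (n : ℝ) (n + 1)) := by
        rw [lintegral_finsetSum _ fun n _ => measurable_one.indicator (hT n)]
        refine sum_congr rfl fun n _ => ?_
        have hpre : T n ∩ Set.Ico 0 1 =
            (fun u => (n : ℝ) + u) ⁻¹' (S ∩ Set.Ico (n : ℝ) (n + 1)) := by
          simp [T, Set.preimage_const_add_Ico]
        rw [lintegral_indicator_one (hT n), Measure.restrict_apply (hT n), hpre,
          measure_preimage_add]
    _ = volume (⋃ n ∈ F, S ∩ Set.Ico (n : ℝ) (n + 1)) :=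
        (measure_biUnion_finset
          (fun m _ n _ hmn => ((Set.pairwise_disjoint_Ico_intCast ℝ hmn).mono
            Set.inter_subset_right Set.inter_subset_right))
          fun n _ => hS.inter measurableSet_Ico).symm
    _ ≤ volume S := measure_mono (Set.iUnion₂_subset fun _ _ => Set.inter_subset_left)

theorem ofReal_mul_le_volume_of_le_card_translates {S : Set ℝ} [DecidablePred (· ∈ S)]
    (hS : MeasurableSet S) {a : ℝ} (ha : 0 < a) (F : Finset ℤ) {k : ℝ}
    (hk : ∀ u ∈ Set.Ico (0 : ℝ) 1, k ≤ #{n ∈ F | ((n : ℤ) + u) * a ∈ S}) :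
    ENNReal.ofReal (a * k) ≤ volume S := by
  classical
  have h := ofReal_le_volume_of_le_card_translates (hS.preimage (measurable_mul_const a)) F
    fun u hu => by simpa only [Set.mem_preimage] using hk u hu
  rw [Real.volume_preimage_mul_right ha.ne', abs_of_pos (inv_pos.2 ha)] at h
  calc ENNReal.ofReal (a * k) = ENNReal.ofReal a * ENNReal.ofReal k := ENNReal.ofReal_mul ha.le
    _ ≤ ENNReal.ofReal a * (ENNReal.ofReal a⁻¹ * volume S) := by gcongr
    _ = volume S := by
        rw [← mul_assoc, ← ENNReal.ofReal_mul ha.le, mul_inv_cancel₀ ha.ne', ENNReal.ofReal_one,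
          one_mul]

theorem ncard_setOf_abs_le_le_card_filter_Icc {P Q : ℤ → Prop} [DecidablePred Q] (N : ℤ)
    (hPQ : ∀ n ∈ Icc (-N) (N - 1), P n → Q n) :
    {n : ℤ | |n| ≤ N ∧ P n}.ncard ≤ #{n ∈ Icc (-N) (N - 1) | Q n} + 1 := by
  have hsub : {n : ℤ | |n| ≤ N ∧ P n} ⊆ insert N ↑({n ∈ Icc (-N) (N - 1) | Q n}) := by
    rintro n ⟨hn, hP⟩
    rcases eq_or_ne n N with rfl | hne
    · exact Set.mem_insert _ _
    · have hmem : n ∈ Icc (-N) (N - 1) := mem_Icc.2 ⟨(abs_le.1 hn).1, by grind [abs_le]⟩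
      exact Set.mem_insert_of_mem _ (mem_filter.2 ⟨hmem, hPQ n hmem hP⟩)
  calc _ ≤ (insert N (↑({n ∈ Icc (-N) (N - 1) | Q n}) : Set ℤ)).ncard :=
        Set.ncard_le_ncard hsub (Set.toFinite _)
    _ ≤ _ := by
        rw [← Set.ncard_coe_finset]
        exact Set.ncard_insert_le _ _

theorem eventually_div_natCast_mul_abs_le {ι : Type*} [Finite ι] (c : ℝ) (x : ι → ℝ) {ε : ℝ}
    (hε : 0 < ε) : ∀ᶠ N : ℕ in atTop, ∀ i, c / N * |x i| ≤ ε := by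
  refine eventually_all.2 fun i => ?_
  have h := (tendsto_const_div_atTop_nhds_zero_nat c).mul_const |x i|
  rw [zero_mul] at h
  exact h.eventually (ge_mem_nhds hε)

theorem add_pow_succ_eq_pow_add_sum {R : Type*} [CommSemiring R] (x y : R) {j L : ℕ}
    (hj : j < L) :
    (x + y) ^ (j + 1) =
      y ^ (j + 1) + ∑ k ∈ range L, x ^ (k + 1) * ((j + 1).choose (k + 1) * y ^ (j - k)) := by
  rw [add_pow, sum_range_succ', ← sum_subset (range_subset_range.2 hj)]
  · simp only [pow_zero, one_mul, Nat.sub_zero, Nat.choose_zero_right, Nat.cast_one, mul_one,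
      Nat.add_sub_add_right]
    rw [add_comm]
    congr 1
    exact sum_congr rfl fun k _ => by ring
  · intro k _ hk
    rw [Nat.choose_eq_zero_of_lt (by simpa using hk), Nat.cast_zero, zero_mul, mul_zero]

theorem norm_coe_add_sum_le (x : ℝ) {ι : Type*} (s : Finset ι) (y : ι → ℝ) :
    ‖((x + ∑ k ∈ s, y k : ℝ) : AddCircle (1 : ℝ))‖ ≤
      |x| + ∑ k ∈ s, ‖(y k : AddCircle (1 : ℝ))‖ := by
  have hsum : ((∑ k ∈ s, y k : ℝ) : AddCircle (1 : ℝ)) = ∑ k ∈ s, (y k : AddCircle (1 : ℝ)) :=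
    map_sum (QuotientAddGroup.mk' _) y s
  rw [AddCircle.coe_add, hsum]
  exact (norm_add_le _ _).trans (add_le_add QuotientAddGroup.norm_mk_le_norm (norm_sum_le _ _))

theorem norm_coe_add_mul_pow_mul_le {n u a x δ : ℝ} {j L : ℕ} (hj : j < L)
    (h : ∀ k < L, ‖((n ^ (k + 1) * ((j + 1).choose (k + 1) * u ^ (j - k) * a ^ (j + 1) * x) :
      ℝ) : AddCircle (1 : ℝ))‖ ≤ δ) :
    ‖((((n + u) * a) ^ (j + 1) * x : ℝ) : AddCircle (1 : ℝ))‖ ≤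
      |(u * a) ^ (j + 1) * x| + L * δ := by
  have hexpand : ((n + u) * a) ^ (j + 1) * x = (u * a) ^ (j + 1) * x +
      ∑ k ∈ range L, n ^ (k + 1) * ((j + 1).choose (k + 1) * u ^ (j - k) * a ^ (j + 1) * x) := by
    rw [mul_pow, add_pow_succ_eq_pow_add_sum n u hj, add_mul, add_mul, sum_mul, sum_mul]
    congr 1
    · ring
    · exact sum_congr rfl fun k _ => by ring
  rw [hexpand]
  refine (norm_coe_add_sum_le _ _ _).trans (add_le_add_right ?_ _)
  simpa using sum_le_card_nsmul _ _ δ fun k hk => h k (mem_range.1 hk)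

theorem abs_mul_pow_succ_mul_le {u a : ℝ} (hu : u ∈ Set.Ico (0 : ℝ) 1) (ha₀ : 0 ≤ a)
    (ha₁ : a ≤ 1) (j : ℕ) (x : ℝ) : |(u * a) ^ (j + 1) * x| ≤ a * |x| := by
  have hua₀ : 0 ≤ u * a := mul_nonneg hu.1 ha₀
  have hua : u * a ≤ a := mul_le_of_le_one_left ha₀ hu.2.le
  rw [abs_mul, abs_of_nonneg (pow_nonneg hua₀ _)]
  gcongr
  exact (pow_le_of_le_one hua₀ (hua.trans ha₁) j.succ_ne_zero).trans hua

section

variable {ℓ : ℕ} {d : Fin ℓ → ℕ}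

def polyBohrSet (c ε : ℝ) (ξ : (j : Fin ℓ) → Fin (d j) → ℝ) : Set ℝ :=
  {y : ℝ | y ∈ Set.Icc (-c) c ∧ ∀ (j : Fin ℓ) (i : Fin (d j)),
    ‖((y ^ ((j : ℕ) + 1) * ξ j i : ℝ) : AddCircle (1 : ℝ))‖ ≤ ε}

theorem measurableSet_polyBohrSet (c ε : ℝ) (ξ : (j : Fin ℓ) → Fin (d j) → ℝ) :
    MeasurableSet (polyBohrSet c ε ξ) := by
  simp only [polyBohrSet, Set.ofPred_and, Set.ofPred_forall, Set.ofPred_mem_eq]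
  exact measurableSet_Icc.inter (.iInter fun j => .iInter fun i =>
    measurableSet_le ((AddCircle.continuous_mk' 1).comp (by fun_prop)).norm.measurable
      measurable_const)

/-- `shiftedCoeffs ξ u a k m` is the coefficient of `n ^ (k + 1)` in
`((n + u) * a) ^ (j + 1) * ξ j i`, where `m` encodes the pair `(j, i)`. -/
def shiftedCoeffs (ξ : (j : Fin ℓ) → Fin (d j) → ℝ) (u a : ℝ) (k : Fin ℓ)
    (m : Fin (∑ j, d j)) : ℝ :=
  let p := finSigmaFinEquiv.symm m
  ((p.1 : ℕ) + 1).choose ((k : ℕ) + 1) * u ^ ((p.1 : ℕ) - k) * a ^ ((p.1 : ℕ) + 1) * ξ p.1 p.2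

theorem norm_coe_add_mul_pow_mul_le_of_shiftedCoeffs (ξ : (j : Fin ℓ) → Fin (d j) → ℝ)
    {n u a δ : ℝ}
    (h : ∀ (k : Fin ℓ) m, ‖((n ^ ((k : ℕ) + 1) * shiftedCoeffs ξ u a k m : ℝ) :
      AddCircle (1 : ℝ))‖ ≤ δ)
    (j : Fin ℓ) (i : Fin (d j)) :
    ‖((((n + u) * a) ^ ((j : ℕ) + 1) * ξ j i : ℝ) : AddCircle (1 : ℝ))‖ ≤
      |(u * a) ^ ((j : ℕ) + 1) * ξ j i| + ℓ * δ :=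
  norm_coe_add_mul_pow_mul_le j.isLt fun k hk => by
    have hk := h ⟨k, hk⟩ (finSigmaFinEquiv ⟨j, i⟩)
    rwa [shiftedCoeffs, Equiv.symm_apply_apply] at hk

theorem add_mul_mem_polyBohrSet {ξ : (j : Fin ℓ) → Fin (d j) → ℝ} {c ε δ a u : ℝ} {N : ℕ}
    {n : ℤ} (ha₀ : 0 ≤ a) (ha₁ : a ≤ 1) (haN : N * a = c) (hδ : ℓ * δ ≤ ε / 2)
    (hξ : ∀ j i, a * |ξ j i| ≤ ε / 2) (hu : u ∈ Set.Ico (0 : ℝ) 1)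
    (hn : n ∈ Icc (-(N : ℤ)) (N - 1))
    (hgood : ∀ (k : Fin ℓ) m, ‖(((n : ℝ) ^ ((k : ℕ) + 1) * shiftedCoeffs ξ u a k m : ℝ) :
      AddCircle (1 : ℝ))‖ ≤ δ) :
    ((n : ℝ) + u) * a ∈ polyBohrSet c ε ξ := by
  have hnN : -(N : ℝ) ≤ n ∧ (n : ℝ) + 1 ≤ N := by
    rw [mem_Icc] at hn
    constructor <;> [exact_mod_cast hn.1; exact_mod_cast (by omega : n + 1 ≤ N)]
  refine ⟨⟨by nlinarith [hu.1], by nlinarith [hu.2]⟩, fun j i => ?_⟩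
  calc _ ≤ |(u * a) ^ ((j : ℕ) + 1) * ξ j i| + ℓ * δ :=
        norm_coe_add_mul_pow_mul_le_of_shiftedCoeffs ξ hgood j i
    _ ≤ a * |ξ j i| + ε / 2 := add_le_add (abs_mul_pow_succ_mul_le hu ha₀ ha₁ _ _) hδ
    _ ≤ ε := by linarith [hξ j i]

end

/-- Diophantine reduction from `ℝ` to `ℤ`: if for all `ℓ ≥ 1`, `d_1, …, d_ℓ`,
`α_j ∈ ℝ^{d_j}`, `ε > 0` and `N ≥ 1` the proportion of integers `|n| ≤ N` with
`‖nʲ α_j‖_{𝕋^{d_j}} ≤ ε` for all `j` is bounded below by a positive constant depending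
only on `ε, ℓ, (d_j)`, then for any `c > 0`, `ℓ ≥ 1`, `d_j`, `ε > 0` the Lebesgue measure
of `{y ∈ [−c,c] : ‖yʲ ξ_j‖_{𝕋^{d_j}} ≤ ε ∀ j}` is bounded below by a positive constant
depending only on `ε, ℓ, c, (d_j)` (not on the `ξ_j`). -/
theorem diophantine_reduction_real_of_int
    (hZ : ∀ (ℓ : ℕ), 1 ≤ ℓ → ∀ (d : Fin ℓ → ℕ) (ε : ℝ), 0 < ε →
      ∃ c : ℝ, 0 < c ∧ ∀ (α : (j : Fin ℓ) → Fin (d j) → ℝ) (N : ℕ), 1 ≤ N →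
        c ≤ (N : ℝ)⁻¹ *
          (Set.ncard {nn : ℤ | |nn| ≤ (N : ℤ) ∧ ∀ (j : Fin ℓ) (i : Fin (d j)),
            ‖(((nn : ℝ) ^ ((j : ℕ) + 1) * α j i : ℝ) : AddCircle (1 : ℝ))‖ ≤ ε} : ℝ)) :
    ∀ (c : ℝ), 0 < c → ∀ (ℓ : ℕ), 1 ≤ ℓ → ∀ (d : Fin ℓ → ℕ) (ε : ℝ), 0 < ε →
      ∃ κ : ℝ, 0 < κ ∧ ∀ ξ : (j : Fin ℓ) → Fin (d j) → ℝ,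
        ENNReal.ofReal κ ≤
          volume {y : ℝ | y ∈ Set.Icc (-c) c ∧ ∀ (j : Fin ℓ) (i : Fin (d j)),
            ‖((y ^ ((j : ℕ) + 1) * ξ j i : ℝ) : AddCircle (1 : ℝ))‖ ≤ ε} := by
  intro c hc ℓ hℓ d ε hε
  classical
  obtain ⟨c₀, hc₀, hcount⟩ := hZ ℓ hℓ (fun _ => ∑ j, d j) (ε / (2 * ℓ)) (by positivity)
  refine ⟨c₀ * c / 2, by positivity, fun ξ => ?_⟩
  obtain ⟨N, hN₁, hNc, hNc₀, hNξ⟩ := ((eventually_ge_atTop 1).and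
    ((tendsto_natCast_atTop_atTop.eventually_ge_atTop c).and
    ((tendsto_natCast_atTop_atTop.eventually_ge_atTop (2 / c₀)).and
    (eventually_div_natCast_mul_abs_le c (fun p : (j : Fin ℓ) × Fin (d j) => ξ p.1 p.2)
      (half_pos hε))))).exists
  have hN : (0 : ℝ) < N := by exact_mod_cast hN₁
  have haN : N * (c / N) = c := by field_simp
  have hδ : ℓ * (ε / (2 * ℓ)) = ε / 2 := by field_simp [(Nat.cast_pos.2 hℓ).ne']
  rw [show c₀ * c / 2 = c / N * (c₀ * N / 2) by field_simp]
  refine ofReal_mul_le_volume_of_le_card_translates (measurableSet_polyBohrSet c ε ξ)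
    (by positivity) (Icc (-(N : ℤ)) (N - 1)) fun u hu => ?_
  have hcard := hcount (shiftedCoeffs ξ u (c / N)) N hN₁
  rw [le_inv_mul_iff₀ hN] at hcard
  have hcover := (Nat.cast_le (α := ℝ)).2 (ncard_setOf_abs_le_le_card_filter_Icc N
    fun n hn hgood => add_mul_mem_polyBohrSet (by positivity) ((div_le_one hN).2 hNc) haN hδ.le
      (fun j i => hNξ ⟨j, i⟩) hu hn hgood)
  push_cast at hcover
  linarith [(div_le_iff₀' hc₀).1 hNc₀]
end

section
/- Uniform L^{2+δ} moment bound for fractal measures via restriction: Let δ ∈ (0,1), β₀ ∈ (0,n), and let μ be a probability measure on ℝⁿ with μ(B(x,r)) ≤ A rᵅ and |μ̂(ξ)| ≤ B(1+|ξ|)^{−β/2}. Define p₀ = 2 + 4(n−α)/β. If the restriction estimate ‖f̂‖_{L²(dμ)} ≤ C_{n,β₀} max(A,B)^{p₀/(2p)} ‖f‖_{L^{p'}(ℝⁿ)} holds for p ≥ p₀ (as provided by the Bak–Seeger theorem), then uniformly for n − δβ₀/4 ≤ α < n and β₀ ≤ β < n, one has ‖μ̂‖_{L^{2+δ}(ℝⁿ)}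 ≲_{β₀,n,A} B^{1/2}. -/
/-!
Testing `|μ̂|²` against the Gaussian `e^{-π|ξ|²/R²}`, whose Fourier transform is
`Rⁿ e^{-πR²|x|²}`, bounds `∫_{|ξ| ≤ R} |μ̂|²` by `e^π Rⁿ ∬ e^{-πR²|x-y|²} dμ dμ`; cutting the
inner integral into the balls of radius `(k+1)/R` and using `μ(B(x,r)) ≤ A rᵅ` makes this
`≲ A R^{n-α}`. On the dyadic annulus `1 + |ξ| ~ 2ʲ` the decay bound gives
`|μ̂|^δ ≤ B^δ 2^{-jβδ/2}`, and `n - α ≤ δβ₀/4 ≤ βδ/4` makes the annuli contributions to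
`∫ |μ̂|^{2+δ}` decay like `B^δ 2^{-jδβ₀/4}`, uniformly in `α` and `β`. Finally `μ̂(0) = 1` forces
`B ≥ 1`, so `B^{δ/(2+δ)} ≤ B^{1/2}`.
-/

open MeasureTheory Real Complex Metric
open scoped RealInnerProductSpace ENNReal FourierTransform

lemma summable_exp_neg_pi_mul_sq_mul_succ_pow (d : ℕ) :
    Summable fun k : ℕ ↦ rexp (-π * k ^ 2) * (k + 1) ^ d := by
  have h := ((summable_nat_add_iff 1).mpr (summable_pow_mul_exp_neg_nat_mul d pi_pos)).mul_left
    (rexp π)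
  refine h.of_nonneg_of_le (fun _ ↦ by positivity) fun k ↦ ?_
  have hk : (k : ℝ) ≤ (k : ℝ) ^ 2 := by exact_mod_cast Nat.le_self_pow two_ne_zero k
  rw [mul_comm (rexp (-π * _)), ← mul_assoc, mul_comm (rexp π), mul_assoc, ← Real.exp_add]
  push_cast
  gcongr
  nlinarith [pi_pos]

noncomputable def gaussianShellSum (d : ℕ) : ℝ := ∑' k : ℕ, rexp (-π * k ^ 2) * (k + 1) ^ d

lemma gaussianShellSum_nonneg (d : ℕ) : 0 ≤ gaussianShellSum d :=
  tsum_nonneg fun _ ↦ by positivity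

section Frostman

variable {X : Type*} [PseudoMetricSpace X]

lemma ofReal_exp_neg_sq_dist_le_tsum_indicator {R : ℝ} (hR : 0 < R) (x y : X) :
    ENNReal.ofReal (rexp (-(π * R ^ 2) * dist x y ^ 2))
      ≤ ∑' k : ℕ, (closedBall x ((k + 1) / R)).indicator
          (fun _ ↦ ENNReal.ofReal (rexp (-π * k ^ 2))) y := by
  set k := ⌊R * dist x y⌋₊
  have hk : (k : ℝ) ≤ R * dist x y := Nat.floor_le (by positivity)
  have hmem : y ∈ closedBall x ((k + 1) / R) := by
    rw [mem_closedBall, le_div_iff₀ hR, dist_comm, mul_comm]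
    exact (Nat.lt_floor_add_one _).le
  refine le_trans ?_ (ENNReal.le_tsum k)
  rw [Set.indicator_of_mem hmem]
  refine ENNReal.ofReal_le_ofReal (exp_le_exp.mpr ?_)
  nlinarith [pi_pos, sq_nonneg ((k : ℝ)), mul_self_le_mul_self (Nat.cast_nonneg k) hk]

variable [MeasurableSpace X] [OpensMeasurableSpace X]

lemma lintegral_exp_neg_sq_dist_le {μ : Measure X} {A α R : ℝ} {d : ℕ} (hA : 0 ≤ A)
    (hα : α ≤ d) (hR : 0 < R)
    (hball : ∀ x r, 0 < r → μ (closedBall x r) ≤ ENNReal.ofReal (A * r ^ α)) (x : X) :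
    ∫⁻ y, ENNReal.ofReal (rexp (-(π * R ^ 2) * dist x y ^ 2)) ∂μ
      ≤ ENNReal.ofReal (gaussianShellSum d * A * R ^ (-α)) := by
  have hshell (k : ℕ) : ((k + 1) / R) ^ α ≤ (k + 1) ^ d * R ^ (-α) := by
    rw [div_rpow (by positivity) hR.le, rpow_neg hR.le, div_eq_mul_inv, ← rpow_natCast]
    gcongr
    · linarith [(Nat.cast_nonneg k : (0 : ℝ) ≤ k)]
  calc ∫⁻ y, ENNReal.ofReal (rexp (-(π * R ^ 2) * dist x y ^ 2)) ∂μ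
      ≤ ∫⁻ y, ∑' k : ℕ, (closedBall x ((k + 1) / R)).indicator
          (fun _ ↦ ENNReal.ofReal (rexp (-π * k ^ 2))) y ∂μ :=
        lintegral_mono (ofReal_exp_neg_sq_dist_le_tsum_indicator hR x)
    _ = ∑' k : ℕ, ENNReal.ofReal (rexp (-π * k ^ 2)) * μ (closedBall x ((k + 1) / R)) := by
        rw [lintegral_tsum fun k ↦
          (measurable_const.indicator measurableSet_closedBall).aemeasurable]
        simp_rw [lintegral_indicator_const measurableSet_closedBall]
    _ ≤ ∑' k : ℕ, ENNReal.ofReal (rexp (-π * k ^ 2) * (k + 1) ^ d * (A * R ^ (-α))) := by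
        gcongr with k
        refine (mul_le_mul_right (hball x _ (by positivity)) _).trans ?_
        rw [← ENNReal.ofReal_mul (by positivity), mul_assoc]
        refine ENNReal.ofReal_le_ofReal (mul_le_mul_of_nonneg_left ?_ (by positivity))
        rw [mul_left_comm]
        exact mul_le_mul_of_nonneg_left (hshell k) hA
    _ = ENNReal.ofReal (gaussianShellSum d * A * R ^ (-α)) := by
        rw [← ENNReal.ofReal_tsum_of_nonneg (fun k ↦ by positivity)
          ((summable_exp_neg_pi_mul_sq_mul_succ_pow d).mul_right _), tsum_mul_right, mul_assoc]
        rfl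

lemma integral_exp_neg_sq_dist_prod_le [SecondCountableTopology X] {μ : Measure X}
    [IsProbabilityMeasure μ] {A α R : ℝ} {d : ℕ} (hA : 0 ≤ A) (hα : α ≤ d) (hR : 0 < R)
    (hball : ∀ x r, 0 < r → μ (closedBall x r) ≤ ENNReal.ofReal (A * r ^ α)) :
    ∫ z, rexp (-(π * R ^ 2) * dist z.1 z.2 ^ 2) ∂(μ.prod μ)
      ≤ gaussianShellSum d * A * R ^ (-α) := by
  rw [integral_eq_lintegral_of_nonneg_ae (Filter.Eventually.of_forall fun _ ↦ by positivity)
    (by fun_prop)]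
  refine ENNReal.toReal_le_of_le_ofReal (by positivity [gaussianShellSum_nonneg d]) ?_
  calc ∫⁻ z, ENNReal.ofReal (rexp (-(π * R ^ 2) * dist z.1 z.2 ^ 2)) ∂(μ.prod μ)
      ≤ ∫⁻ x, ∫⁻ y, ENNReal.ofReal (rexp (-(π * R ^ 2) * dist x y ^ 2)) ∂μ ∂μ :=
        lintegral_prod_le _
    _ ≤ ∫⁻ _, ENNReal.ofReal (gaussianShellSum d * A * R ^ (-α)) ∂μ :=
        lintegral_mono (lintegral_exp_neg_sq_dist_le hA hα hR hball)
    _ = ENNReal.ofReal (gaussianShellSum d * A * R ^ (-α)) := by simp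

end Frostman

section Dyadic

variable {F : Type*} [NormedAddCommGroup F]

def dyadicShell (j : ℕ) : Set F := {ξ | ⌊logb 2 (1 + ‖ξ‖)⌋₊ = j}

lemma pow_le_one_add_norm_and_lt_of_mem_dyadicShell {ξ : F} {j : ℕ} (h : ξ ∈ dyadicShell j) :
    (2 : ℝ) ^ j ≤ 1 + ‖ξ‖ ∧ 1 + ‖ξ‖ < 2 ^ (j + 1) := by
  have hξ : 1 ≤ 1 + ‖ξ‖ := le_add_of_nonneg_right (norm_nonneg ξ)
  replace h : ⌊logb 2 (1 + ‖ξ‖)⌋₊ = j := h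
  rw [Nat.floor_eq_iff (logb_nonneg one_lt_two hξ)] at h
  rw [← rpow_natCast, ← rpow_natCast, ← le_logb_iff_rpow_le one_lt_two (by linarith),
    ← logb_lt_iff_lt_rpow one_lt_two (by linarith)]
  exact_mod_cast h

variable [MeasurableSpace F] [OpensMeasurableSpace F]

lemma measurableSet_dyadicShell (j : ℕ) : MeasurableSet (dyadicShell j : Set F) :=
  ((measurable_const.add measurable_norm).log.div_const _).nat_floor (measurableSet_singleton j)

variable {ν : Measure F} {g : F → ℝ≥0∞} {K s e : ℝ}

lemma setLIntegral_dyadicShell_one_add_norm_rpow_mul_le (he : e ≤ 0)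
    (hg : ∀ R : ℝ, 1 ≤ R → ∫⁻ ξ in closedBall 0 R, g ξ ∂ν ≤ ENNReal.ofReal (K * R ^ s))
    (j : ℕ) :
    ∫⁻ ξ in dyadicShell j, ENNReal.ofReal ((1 + ‖ξ‖) ^ e) * g ξ ∂ν
      ≤ ENNReal.ofReal (K * 2 ^ s * (2 ^ (e + s)) ^ j) := by
  have hsub : dyadicShell j ⊆ closedBall (0 : F) (2 ^ (j + 1)) := fun ξ hξ ↦ by
    rw [mem_closedBall_zero_iff]
    linarith [(pow_le_one_add_norm_and_lt_of_mem_dyadicShell hξ).2]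
  calc ∫⁻ ξ in dyadicShell j, ENNReal.ofReal ((1 + ‖ξ‖) ^ e) * g ξ ∂ν
      ≤ ∫⁻ ξ in dyadicShell j, ENNReal.ofReal (((2 : ℝ) ^ j) ^ e) * g ξ ∂ν :=
        setLIntegral_mono' (measurableSet_dyadicShell j) fun ξ hξ ↦ mul_le_mul_left
          (ENNReal.ofReal_le_ofReal (rpow_le_rpow_of_nonpos (by positivity)
            (pow_le_one_add_norm_and_lt_of_mem_dyadicShell hξ).1 he)) _
    _ ≤ ENNReal.ofReal (((2 : ℝ) ^ j) ^ e) * ∫⁻ ξ in closedBall 0 (2 ^ (j + 1)), g ξ ∂ν := by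
        rw [lintegral_const_mul' _ _ ENNReal.ofReal_ne_top]
        exact mul_le_mul_right (lintegral_mono_set hsub) _
    _ ≤ ENNReal.ofReal (((2 : ℝ) ^ j) ^ e) * ENNReal.ofReal (K * (2 ^ (j + 1)) ^ s) := by
        gcongr
        exact hg _ (one_le_pow₀ one_le_two)
    _ = ENNReal.ofReal (K * 2 ^ s * (2 ^ (e + s)) ^ j) := by
        rw [← ENNReal.ofReal_mul (by positivity), ← rpow_pow_comm zero_le_two,
          ← rpow_pow_comm zero_le_two, rpow_add two_pos]
        ring_nf

lemma lintegral_one_add_norm_rpow_mul_le (hK : 0 ≤ K) (he : e ≤ 0) (hes : e + s < 0)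
    (hg : ∀ R : ℝ, 1 ≤ R → ∫⁻ ξ in closedBall 0 R, g ξ ∂ν ≤ ENNReal.ofReal (K * R ^ s)) :
    ∫⁻ ξ, ENNReal.ofReal ((1 + ‖ξ‖) ^ e) * g ξ ∂ν
      ≤ ENNReal.ofReal (K * 2 ^ s / (1 - 2 ^ (e + s))) := by
  have hratio : 0 ≤ (2 : ℝ) ^ (e + s) := by positivity
  have hlt : (2 : ℝ) ^ (e + s) < 1 := rpow_lt_one_of_one_lt_of_neg one_lt_two hes
  have hcover : ⋃ j, dyadicShell j = (Set.univ : Set F) :=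
    Set.iUnion_eq_univ_iff.mpr fun ξ ↦ ⟨_, rfl⟩
  calc ∫⁻ ξ, ENNReal.ofReal ((1 + ‖ξ‖) ^ e) * g ξ ∂ν
      = ∑' j, ∫⁻ ξ in dyadicShell j, ENNReal.ofReal ((1 + ‖ξ‖) ^ e) * g ξ ∂ν := by
        rw [← lintegral_iUnion measurableSet_dyadicShell
          (pairwise_disjoint_fiber (fun ξ : F ↦ ⌊logb 2 (1 + ‖ξ‖)⌋₊)), hcover, setLIntegral_univ]
    _ ≤ ∑' j, ENNReal.ofReal (K * 2 ^ s * (2 ^ (e + s)) ^ j) :=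
        ENNReal.tsum_le_tsum (setLIntegral_dyadicShell_one_add_norm_rpow_mul_le he hg)
    _ = ENNReal.ofReal (K * 2 ^ s / (1 - 2 ^ (e + s))) := by
        rw [← ENNReal.ofReal_tsum_of_nonneg (fun j ↦ by positivity)
          ((summable_geometric_of_lt_one hratio hlt).mul_left _), tsum_mul_left,
          tsum_geometric_of_lt_one hratio hlt, div_eq_mul_inv]

end Dyadic

section Fourier

variable {E : Type*} [NormedAddCommGroup E] [InnerProductSpace ℝ E] [MeasurableSpace E]

-- The paper's `μ̂ ξ = ∫ e^{-2πi⟪x, ξ⟫} dμ(x)`, as Mathlib's Fourier integral of `1` against `μ`.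
noncomputable def fourierStieltjes (μ : Measure E) : E → ℂ :=
  VectorFourier.fourierIntegral 𝐞 μ (innerₗ E) 1

lemma fourierStieltjes_eq_charFun (μ : Measure E) (ξ : E) :
    fourierStieltjes μ ξ = charFun μ (-(2 * π) • ξ) := by
  rw [charFun_eq_fourierIntegral', smul_smul, neg_mul_neg, inv_mul_cancel₀ (by positivity),
    one_smul]
  rfl

lemma fourierStieltjes_apply (μ : Measure E) (ξ : E) :
    fourierStieltjes μ ξ = ∫ x, cexp (-(2 * π * I) * ⟪ξ, x⟫) ∂μ := by
  rw [fourierStieltjes_eq_charFun, charFun_apply]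
  congr 1 with x
  rw [inner_smul_right, real_inner_comm]
  push_cast
  ring_nf

lemma norm_fourierStieltjes_le_one (μ : Measure E) [IsProbabilityMeasure μ] (ξ : E) :
    ‖fourierStieltjes μ ξ‖ ≤ 1 := by
  rw [fourierStieltjes_eq_charFun]
  exact norm_charFun_le_one _

lemma fourierStieltjes_zero (μ : Measure E) [IsProbabilityMeasure μ] :
    fourierStieltjes μ 0 = 1 := by
  simp [fourierStieltjes_eq_charFun]

@[fun_prop]
lemma continuous_fourierStieltjes [BorelSpace E] [SecondCountableTopology E]
    (μ : Measure E) [IsFiniteMeasure μ] : Continuous (fourierStieltjes μ) := by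
  simp_rw [funext (fourierStieltjes_eq_charFun μ)]
  fun_prop

lemma fourierStieltjes_map_sub_prod [BorelSpace E] [SecondCountableTopology E]
    (μ : Measure E) [IsFiniteMeasure μ] (ξ : E) :
    fourierStieltjes ((μ.prod μ).map fun z ↦ z.1 - z.2) ξ = ‖fourierStieltjes μ ξ‖ ^ 2 := by
  simp_rw [fourierStieltjes_eq_charFun, ← mul_conj', ← charFun_neg, charFun_apply]
  rw [integral_map (by fun_prop) (by fun_prop), ← integral_prod_mul]
  congr 1 with z
  rw [← Complex.exp_add, inner_sub_left, inner_neg_right]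
  push_cast
  ring_nf

variable [BorelSpace E] [FiniteDimensional ℝ E]

lemma re_pi_div_sq_pos {R : ℝ} (hR : 0 < R) : 0 < ((π : ℂ) / R ^ 2).re := by
  rw [← ofReal_pow, ← ofReal_div, ofReal_re]
  positivity

lemma integrable_gaussian_scaled {R : ℝ} (hR : 0 < R) :
    Integrable fun ξ : E ↦ cexp (-(π / R ^ 2) * ‖ξ‖ ^ 2) := by
  simpa using GaussianFourier.integrable_cexp_neg_mul_sq_norm_add (re_pi_div_sq_pos hR) 0 (0 : E)

lemma fourier_gaussian_scaled {R : ℝ} (hR : 0 < R) (v : E) :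
    𝓕 (fun ξ : E ↦ cexp (-(π / R ^ 2) * ‖ξ‖ ^ 2)) v
      = R ^ Module.finrank ℝ E * cexp (-(π * R ^ 2) * ‖v‖ ^ 2) := by
  rw [fourier_gaussian_innerProductSpace (re_pi_div_sq_pos hR) v]
  have hpow : ((π : ℂ) / ((π : ℂ) / R ^ 2)) ^ ((Module.finrank ℝ E : ℂ) / 2)
      = (R : ℂ) ^ Module.finrank ℝ E := by
    rw [show ((π : ℂ) / ((π : ℂ) / R ^ 2)) = ((R ^ 2 : ℝ) : ℂ) by push_cast; field_simp,
      show ((Module.finrank ℝ E : ℂ) / 2) = ((Module.finrank ℝ E / 2 : ℝ) : ℂ) by push_cast; rfl,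
      ← ofReal_cpow (by positivity), ← Real.rpow_natCast_mul (by positivity),
      Nat.cast_ofNat, mul_div_cancel₀ _ two_ne_zero, Real.rpow_natCast, ofReal_pow]
  have hexp : -(π : ℂ) ^ 2 * ‖v‖ ^ 2 / ((π : ℂ) / R ^ 2) = -(π * R ^ 2) * ‖v‖ ^ 2 := by
    field_simp
  rw [hpow, hexp]

lemma integral_sq_norm_fourierStieltjes_mul_gaussian (μ : Measure E) [IsFiniteMeasure μ]
    {R : ℝ} (hR : 0 < R) :
    ∫ ξ, ‖fourierStieltjes μ ξ‖ ^ 2 * rexp (-(π / R ^ 2) * ‖ξ‖ ^ 2)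
      = R ^ Module.finrank ℝ E * ∫ z, rexp (-(π * R ^ 2) * ‖z.1 - z.2‖ ^ 2) ∂(μ.prod μ) := by
  apply ofReal_injective
  push_cast
  rw [← integral_complex_ofReal, ← integral_complex_ofReal, ← integral_const_mul]
  simp_rw [ofReal_mul, ofReal_pow, ← fourierStieltjes_map_sub_prod, ofReal_exp]
  push_cast
  -- Parseval for the law of `x - y`, whose transform is `|μ̂|²`, against the Gaussian.
  have := VectorFourier.integral_fourierIntegral_smul_eq_flip (e := 𝐞) (L := innerₗ E)
    (μ := (μ.prod μ).map fun z ↦ z.1 - z.2) (ν := volume) (f := 1)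
    (g := fun ξ : E ↦ cexp (-(π / R ^ 2) * ‖ξ‖ ^ 2)) Real.continuous_fourierChar
    continuous_inner (integrable_const 1) (integrable_gaussian_scaled hR)
  have hF : VectorFourier.fourierIntegral 𝐞 volume (innerₗ E)
      (fun ξ : E ↦ cexp (-(π / R ^ 2) * ‖ξ‖ ^ 2))
        = fun v ↦ (R : ℂ) ^ Module.finrank ℝ E * cexp (-(π * R ^ 2) * ‖v‖ ^ 2) :=
    funext (fourier_gaussian_scaled hR)
  simp only [flip_innerₗ, Pi.one_apply, smul_eq_mul, one_mul, hF] at this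
  rw [fourierStieltjes, this, integral_map (by fun_prop) (by fun_prop)]

lemma integrable_sq_norm_fourierStieltjes_mul_gaussian (μ : Measure E) [IsProbabilityMeasure μ]
    {R : ℝ} (hR : 0 < R) :
    Integrable fun ξ ↦ ‖fourierStieltjes μ ξ‖ ^ 2 * rexp (-(π / R ^ 2) * ‖ξ‖ ^ 2) := by
  refine (integrable_gaussian_scaled hR).norm.mono' (by fun_prop)
    (Filter.Eventually.of_forall fun ξ ↦ ?_)
  have hG : ‖cexp (-(π / R ^ 2) * ‖ξ‖ ^ 2)‖ = rexp (-(π / R ^ 2) * ‖ξ‖ ^ 2) := by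
    rw [norm_exp, ← ofReal_pow, ← ofReal_div, ← ofReal_pow, ← ofReal_neg, ← ofReal_mul, ofReal_re]
  rw [hG, Real.norm_of_nonneg (by positivity)]
  exact mul_le_of_le_one_left (by positivity)
    (pow_le_one₀ (norm_nonneg _) (norm_fourierStieltjes_le_one μ ξ))

lemma lintegral_closedBall_sq_enorm_fourierStieltjes_le (μ : Measure E) [IsProbabilityMeasure μ]
    {A α R : ℝ} (hA : 0 ≤ A) (hα : α ≤ Module.finrank ℝ E) (hR : 0 < R)
    (hball : ∀ x r, 0 < r → μ (closedBall x r) ≤ ENNReal.ofReal (A * r ^ α)) :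
    ∫⁻ ξ in closedBall 0 R, ‖fourierStieltjes μ ξ‖ₑ ^ 2
      ≤ ENNReal.ofReal (rexp π * gaussianShellSum (Module.finrank ℝ E) * A
          * R ^ ((Module.finrank ℝ E : ℝ) - α)) := by
  set d := Module.finrank ℝ E
  set G : E → ℝ := fun ξ ↦ rexp (-(π / R ^ 2) * ‖ξ‖ ^ 2)
  have henergy : ∫ z, rexp (-(π * R ^ 2) * ‖z.1 - z.2‖ ^ 2) ∂(μ.prod μ)
      ≤ gaussianShellSum d * A * R ^ (-α) := by
    simpa only [dist_eq_norm] using integral_exp_neg_sq_dist_prod_le hA hα hR hball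
  have hweight : ∀ ξ ∈ closedBall (0 : E) R,
      ‖fourierStieltjes μ ξ‖ₑ ^ 2
        ≤ ENNReal.ofReal (rexp π * (‖fourierStieltjes μ ξ‖ ^ 2 * G ξ)) := by
    intro ξ hξ
    have hξR : ‖ξ‖ ^ 2 / R ^ 2 ≤ 1 := by
      rw [div_le_one (by positivity)]
      exact pow_le_pow_left₀ (norm_nonneg _) (mem_closedBall_zero_iff.mp hξ) 2
    have hone : 1 ≤ rexp π * G ξ := by
      rw [← Real.exp_add, one_le_exp_iff, neg_mul, div_mul_eq_mul_div, mul_div_assoc]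
      nlinarith [pi_pos]
    rw [← ofReal_norm, ← ENNReal.ofReal_pow (norm_nonneg _)]
    refine ENNReal.ofReal_le_ofReal ?_
    nlinarith [sq_nonneg ‖fourierStieltjes μ ξ‖]
  calc ∫⁻ ξ in closedBall 0 R, ‖fourierStieltjes μ ξ‖ₑ ^ 2
      ≤ ∫⁻ ξ in closedBall 0 R, ENNReal.ofReal (rexp π * (‖fourierStieltjes μ ξ‖ ^ 2 * G ξ)) :=
        setLIntegral_mono' measurableSet_closedBall hweight
    _ ≤ ∫⁻ ξ, ENNReal.ofReal (rexp π * (‖fourierStieltjes μ ξ‖ ^ 2 * G ξ)) :=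
        setLIntegral_le_lintegral _ _
    _ = ENNReal.ofReal (rexp π * R ^ d
          * ∫ z, rexp (-(π * R ^ 2) * ‖z.1 - z.2‖ ^ 2) ∂(μ.prod μ)) := by
        rw [← ofReal_integral_eq_lintegral_ofReal
          ((integrable_sq_norm_fourierStieltjes_mul_gaussian μ hR).const_mul _)
          (Filter.Eventually.of_forall fun _ ↦ by positivity), integral_const_mul,
          integral_sq_norm_fourierStieltjes_mul_gaussian μ hR, mul_assoc]
    _ ≤ ENNReal.ofReal (rexp π * gaussianShellSum d * A * R ^ ((d : ℝ) - α)) := by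
        refine ENNReal.ofReal_le_ofReal
          ((mul_le_mul_of_nonneg_left henergy (by positivity)).trans_eq ?_)
        rw [sub_eq_add_neg, rpow_add hR, rpow_natCast]
        ring

lemma enorm_rpow_two_add_le_of_norm_le {z : ℂ} {b δ : ℝ} (hδ : 0 ≤ δ) (h : ‖z‖ ≤ b) :
    ‖z‖ₑ ^ (2 + δ) ≤ ENNReal.ofReal (b ^ δ) * ‖z‖ₑ ^ 2 := by
  rw [add_comm, ENNReal.rpow_add_of_nonneg _ _ hδ zero_le_two, ENNReal.rpow_two,
    ← ofReal_norm, ENNReal.ofReal_rpow_of_nonneg (norm_nonneg _) hδ]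
  gcongr

theorem lintegral_enorm_fourierStieltjes_rpow_le (μ : Measure E) [IsProbabilityMeasure μ]
    {A α β δ ε B : ℝ} (hA : 0 ≤ A) (hαε : Module.finrank ℝ E - ε ≤ α)
    (hα : α ≤ Module.finrank ℝ E) (hε : 0 < ε) (hδ : 0 ≤ δ) (hβδ : 4 * ε ≤ β * δ) (hB : 0 ≤ B)
    (hball : ∀ x r, 0 < r → μ (closedBall x r) ≤ ENNReal.ofReal (A * r ^ α))
    (hdecay : ∀ ξ, ‖fourierStieltjes μ ξ‖ ≤ B * (1 + ‖ξ‖) ^ (-(β / 2))) :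
    ∫⁻ ξ, ‖fourierStieltjes μ ξ‖ₑ ^ (2 + δ)
      ≤ ENNReal.ofReal (B ^ δ * (rexp π * gaussianShellSum (Module.finrank ℝ E) * A * 2 ^ ε
          / (1 - 2 ^ (-ε)))) := by
  set K := rexp π * gaussianShellSum (Module.finrank ℝ E) * A
  have hK : 0 ≤ K := by positivity [gaussianShellSum_nonneg (Module.finrank ℝ E)]
  have hpoint (ξ : E) : ‖fourierStieltjes μ ξ‖ₑ ^ (2 + δ)
      ≤ ENNReal.ofReal (B ^ δ)
        * (ENNReal.ofReal ((1 + ‖ξ‖) ^ (-2 * ε)) * ‖fourierStieltjes μ ξ‖ₑ ^ 2) := by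
    refine (enorm_rpow_two_add_le_of_norm_le hδ (hdecay ξ)).trans ?_
    rw [← mul_assoc, ← ENNReal.ofReal_mul (by positivity)]
    gcongr
    rw [mul_rpow hB (by positivity), ← rpow_mul (by positivity)]
    refine mul_le_mul_of_nonneg_left (rpow_le_rpow_of_exponent_le ?_ ?_) (by positivity)
    · linarith [norm_nonneg ξ]
    · linarith
  have hlocal (R : ℝ) (hR : 1 ≤ R) :
      ∫⁻ ξ in closedBall 0 R, ‖fourierStieltjes μ ξ‖ₑ ^ 2 ≤ ENNReal.ofReal (K * R ^ ε) := by
    refine (lintegral_closedBall_sq_enorm_fourierStieltjes_le μ hA hα (by linarith) hball).trans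
      (ENNReal.ofReal_le_ofReal (mul_le_mul_of_nonneg_left ?_ hK))
    exact rpow_le_rpow_of_exponent_le hR (by linarith)
  calc ∫⁻ ξ, ‖fourierStieltjes μ ξ‖ₑ ^ (2 + δ)
      ≤ ∫⁻ ξ, ENNReal.ofReal (B ^ δ)
          * (ENNReal.ofReal ((1 + ‖ξ‖) ^ (-2 * ε)) * ‖fourierStieltjes μ ξ‖ₑ ^ 2) :=
        lintegral_mono hpoint
    _ = ENNReal.ofReal (B ^ δ)
          * ∫⁻ ξ, ENNReal.ofReal ((1 + ‖ξ‖) ^ (-2 * ε)) * ‖fourierStieltjes μ ξ‖ₑ ^ 2 :=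
        lintegral_const_mul' _ _ ENNReal.ofReal_ne_top
    _ ≤ ENNReal.ofReal (B ^ δ) * ENNReal.ofReal (K * 2 ^ ε / (1 - 2 ^ (-2 * ε + ε))) := by
        gcongr
        exact lintegral_one_add_norm_rpow_mul_le hK (by linarith) (by linarith) hlocal
    _ = _ := by
        rw [← ENNReal.ofReal_mul (by positivity)]
        ring_nf

end Fourier

lemma fourierStieltjes_euclideanSpace_apply {n : ℕ} (μ : Measure (EuclideanSpace ℝ (Fin n)))
    (ξ : EuclideanSpace ℝ (Fin n)) :
    fourierStieltjes μ ξ = ∫ x, cexp (-(2 * π * I) * ∑ i, (ξ i : ℂ) * (x i : ℂ)) ∂μ := by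
  rw [fourierStieltjes_apply]
  congr 1 with x
  simp [PiLp.inner_apply, mul_comm]

lemma eLpNorm_le_ofReal_of_lintegral_rpow_le {X V : Type*} [MeasurableSpace X]
    [NormedAddCommGroup V] {ν : Measure X} {f : X → V} {p M : ℝ} (hp : 0 < p) (hM : 0 ≤ M)
    (h : ∫⁻ x, ‖f x‖ₑ ^ p ∂ν ≤ ENNReal.ofReal M) :
    eLpNorm f (ENNReal.ofReal p) ν ≤ ENNReal.ofReal (M ^ (1 / p)) := by
  rw [eLpNorm_eq_lintegral_rpow_enorm_toReal (by simpa using hp) ENNReal.ofReal_ne_top,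
    ENNReal.toReal_ofReal hp.le, ← ENNReal.ofReal_rpow_of_nonneg hM (by positivity)]
  exact ENNReal.rpow_le_rpow h (by positivity)

lemma rpow_mul_rpow_one_div_two_add_le {B K δ : ℝ} (hB : 1 ≤ B) (hK : 0 ≤ K) (hδ : 0 ≤ δ)
    (hδ2 : δ ≤ 2) :
    (B ^ δ * K) ^ (1 / (2 + δ)) ≤ max 1 K * √B := by
  have hexp : 1 / (2 + δ) ≤ 1 := by rw [div_le_one (by positivity)]; linarith
  calc (B ^ δ * K) ^ (1 / (2 + δ)) ≤ (B ^ δ * max 1 K) ^ (1 / (2 + δ)) := by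
        gcongr
        exact le_max_right _ _
    _ = B ^ (δ / (2 + δ)) * (max 1 K) ^ (1 / (2 + δ)) := by
        rw [mul_rpow (by positivity) (by positivity), ← rpow_mul (by positivity), mul_one_div]
    _ ≤ B ^ (1 / 2 : ℝ) * (max 1 K) ^ (1 : ℝ) := by
        refine mul_le_mul (rpow_le_rpow_of_exponent_le hB ?_)
          (rpow_le_rpow_of_exponent_le (le_max_left _ _) hexp) (by positivity) (by positivity)
        rw [div_le_div_iff₀ (by positivity) two_pos]
        linarith
    _ = max 1 K * √B := by rw [rpow_one, sqrt_eq_rpow, mul_comm]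

theorem uniform_moment_bound_via_restriction_general (n : ℕ)
    (δ β₀ A CR : ℝ) (hδ0 : 0 < δ) (hδ1 : δ < 1) (hβ₀0 : 0 < β₀)
    (hA : 1 ≤ A) :
    ∃ C : ℝ, 0 < C ∧
    ∀ (α β B : ℝ) (μ : Measure (EuclideanSpace ℝ (Fin n))), IsProbabilityMeasure μ →
      (n : ℝ) - δ * β₀ / 4 ≤ α → α < n → β₀ ≤ β → β < n → 0 < B →
      (∀ (x : EuclideanSpace ℝ (Fin n)) (r : ℝ), 0 < r →
        μ (Metric.closedBall x r) ≤ ENNReal.ofReal (A * r ^ α)) →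
      ∀ μhat : EuclideanSpace ℝ (Fin n) → ℂ,
        (∀ ξ, μhat ξ = ∫ x, Complex.exp
            (-(2 * (π : ℂ) * Complex.I) * ∑ i, (ξ i : ℂ) * (x i : ℂ)) ∂μ) →
        (∀ ξ, ‖μhat ξ‖ ≤ B * (1 + ‖ξ‖) ^ (-(β / 2))) →
      -- the restriction estimate, with `p₀ = 2 + 4(n−α)/β`
      (∀ p : ℝ, 2 + 4 * ((n : ℝ) - α) / β ≤ p →
        ∀ f : SchwartzMap (EuclideanSpace ℝ (Fin n)) ℂ,
          (∫ ξ, ‖∫ x, f x * Complex.exp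
              (-(2 * (π : ℂ) * Complex.I) * ∑ i, (ξ i : ℂ) * (x i : ℂ))‖ ^ 2 ∂μ) ≤
            (CR * max A B ^ ((2 + 4 * ((n : ℝ) - α) / β) / (2 * p))) ^ 2 *
              ((eLpNorm (fun x => f x) (ENNReal.ofReal (p / (p - 1))) volume).toReal) ^ 2) →
      eLpNorm μhat (ENNReal.ofReal (2 + δ)) volume ≤
        ENNReal.ofReal (C * Real.sqrt B) := by
  set ε := δ * β₀ / 4
  have hε : 0 < ε := by positivity
  set K := rexp π * gaussianShellSum n * A * 2 ^ ε / (1 - 2 ^ (-ε))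
  have hK : 0 ≤ K := div_nonneg (by positivity [gaussianShellSum_nonneg n])
    (sub_nonneg.mpr (rpow_le_one_of_one_le_of_nonpos one_le_two (by linarith)))
  refine ⟨max 1 K, by positivity, ?_⟩
  intro α β B μ _ hαε hαn hβ _ hB hball μhat hμhat hdecay _
  obtain rfl : μhat = fourierStieltjes μ :=
    funext fun ξ ↦ (hμhat ξ).trans (fourierStieltjes_euclideanSpace_apply μ ξ).symm
  have hB1 : 1 ≤ B := by simpa [fourierStieltjes_zero] using hdecay 0
  have hβδ : 4 * ε ≤ β * δ := by
    simp only [ε]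
    linarith [mul_le_mul_of_nonneg_left hβ hδ0.le]
  have hd : Module.finrank ℝ (EuclideanSpace ℝ (Fin n)) = n := finrank_euclideanSpace_fin
  have hmoment := lintegral_enorm_fourierStieltjes_rpow_le μ (by linarith) (by rw [hd]; linarith)
    (by rw [hd]; linarith) hε hδ0.le hβδ hB.le hball hdecay
  rw [hd] at hmoment
  exact (eLpNorm_le_ofReal_of_lintegral_rpow_le (by positivity) (by positivity) hmoment).trans
    (ENNReal.ofReal_le_ofReal (rpow_mul_rpow_one_div_two_add_le hB1 hK hδ0.le (by linarith)))

/-- Uniform `L^{2+δ}` moment bound for fractal measures via restriction: let `δ ∈ (0,1)`,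
`β₀ ∈ (0,n)`, and `μ` a probability measure on `ℝⁿ` with `μ(B(x,r)) ≤ A rᵅ` and
`|μ̂(ξ)| ≤ B(1+|ξ|)^{−β/2}`.  Set `p₀ = 2 + 4(n−α)/β`.  If the Bak–Seeger restriction
estimate `‖f̂‖_{L²(dμ)} ≤ C_R max(A,B)^{p₀/(2p)} ‖f‖_{L^{p'}}` holds for all `p ≥ p₀` and
Schwartz `f`, then uniformly for `n − δβ₀/4 ≤ α < n` and `β₀ ≤ β < n` one has
`‖μ̂‖_{L^{2+δ}(ℝⁿ)} ≲_{β₀,n,A} B^{1/2}`. -/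
theorem uniform_moment_bound_via_restriction (n : ℕ) (hn : 0 < n)
    (δ β₀ A CR : ℝ) (hδ0 : 0 < δ) (hδ1 : δ < 1) (hβ₀0 : 0 < β₀) (hβ₀n : β₀ < n)
    (hA : 1 ≤ A) (hCR : 0 < CR) :
    ∃ C : ℝ, 0 < C ∧
    ∀ (α β B : ℝ) (μ : Measure (EuclideanSpace ℝ (Fin n))), IsProbabilityMeasure μ →
      (n : ℝ) - δ * β₀ / 4 ≤ α → α < n → β₀ ≤ β → β < n → 0 < B →
      (∀ (x : EuclideanSpace ℝ (Fin n)) (r : ℝ), 0 < r →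
        μ (Metric.closedBall x r) ≤ ENNReal.ofReal (A * r ^ α)) →
      ∀ μhat : EuclideanSpace ℝ (Fin n) → ℂ,
        (∀ ξ, μhat ξ = ∫ x, Complex.exp
            (-(2 * (π : ℂ) * Complex.I) * ∑ i, (ξ i : ℂ) * (x i : ℂ)) ∂μ) →
        (∀ ξ, ‖μhat ξ‖ ≤ B * (1 + ‖ξ‖) ^ (-(β / 2))) →
      -- the restriction estimate, with `p₀ = 2 + 4(n−α)/β`
      (∀ p : ℝ, 2 + 4 * ((n : ℝ) - α) / β ≤ p →
        ∀ f : SchwartzMap (EuclideanSpace ℝ (Fin n)) ℂ,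
          (∫ ξ, ‖∫ x, f x * Complex.exp
              (-(2 * (π : ℂ) * Complex.I) * ∑ i, (ξ i : ℂ) * (x i : ℂ))‖ ^ 2 ∂μ) ≤
            (CR * max A B ^ ((2 + 4 * ((n : ℝ) - α) / β) / (2 * p))) ^ 2 *
              ((eLpNorm (fun x => f x) (ENNReal.ofReal (p / (p - 1))) volume).toReal) ^ 2) →
      eLpNorm μhat (ENNReal.ofReal (2 + δ)) volume ≤
        ENNReal.ofReal (C * Real.sqrt B) :=
  uniform_moment_bound_via_restriction_general n δ β₀ A CR hδ0 hδ1 hβ₀0 hA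
end
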